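/- arXiv:2404.17696 — 8 statements merged into one kernel-verified Lean document; each statement's English description precedes it below -/
import Mathlib

section
/- Let S ⊆ ℝⁿ be a closed set, x̄ ∈ S, and d ∈ T_S(x̄) (the Bouligand tangent cone). Then the union of the outer second-order tangent set T²_S(x̄; d) and the set of nonzero elements of the asymptotic second-order tangent cone T''_S(x̄; d) is nonempty; i.e., T²_S(x̄; d) ∪ (T''_S(x̄; d) \ {0}) ≠ ∅. -/
open Filter Topology Set
open scoped RealInnerProductSpace

noncomputable section

variable {E : Type*} [NormedAddCommGroup E] [InnerProductSpace ℝ E]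

/-- Bouligand (contingent) tangent cone. -/
def tangentConeB (S : Set E) (x : E) : Set E :=
  {d | ∃ (t : ℕ → ℝ) (dk : ℕ → E), (∀ k, 0 < t k) ∧
    Tendsto t atTop (nhds 0) ∧ Tendsto dk atTop (nhds d) ∧
    ∀ k, x + t k • dk k ∈ S}

/-- Outer second-order tangent set. -/
def secondTangent (S : Set E) (x d : E) : Set E :=
  {w | ∃ (t : ℕ → ℝ) (wk : ℕ → E), (∀ k, 0 < t k) ∧
    Tendsto t atTop (nhds 0) ∧ Tendsto wk atTop (nhds w) ∧
    ∀ k, x + t k • d + ((1/2 : ℝ) * t k ^ 2) • wk k ∈ S}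

/-- Asymptotic second-order tangent cone. -/
def asympTangent (S : Set E) (x d : E) : Set E :=
  {w | ∃ (t r : ℕ → ℝ) (wk : ℕ → E), (∀ k, 0 < t k) ∧ (∀ k, 0 < r k) ∧
    Tendsto t atTop (nhds 0) ∧ Tendsto r atTop (nhds 0) ∧
    Tendsto (fun k => t k / r k) atTop (nhds 0) ∧
    Tendsto wk atTop (nhds w) ∧
    ∀ k, x + t k • d + ((1/2 : ℝ) * t k * r k) • wk k ∈ S}

/-- Fréchet (regular) normal cone (empty, by convention, outside of `S`). -/
def frechetNormal (S : Set E) (x : E) : Set E :=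
  {v | x ∈ S ∧ ∀ ε > (0:ℝ), ∃ δ > (0:ℝ), ∀ y ∈ S, ‖y - x‖ < δ →
    ⟪v, y - x⟫ ≤ ε * ‖y - x‖}

/-- Limiting (Mordukhovich) normal cone. -/
def limitingNormal (S : Set E) (x : E) : Set E :=
  {v | ∃ (xk vk : ℕ → E), Tendsto xk atTop (nhds x) ∧
    Tendsto vk atTop (nhds v) ∧ ∀ k, vk k ∈ frechetNormal S (xk k)}

/-- Directional limiting normal cone. -/
def dirLimitingNormal (S : Set E) (x d : E) : Set E :=
  {v | ∃ (t : ℕ → ℝ) (dk vk : ℕ → E), (∀ k, 0 < t k) ∧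
    Tendsto t atTop (nhds 0) ∧ Tendsto dk atTop (nhds d) ∧
    Tendsto vk atTop (nhds v) ∧ ∀ k, vk k ∈ frechetNormal S (x + t k • dk k)}

/-- Directional regular (Clarke) tangent cone. -/
def dirClarkeTangent (S : Set E) (x d : E) : Set E :=
  {v | ∀ (t : ℕ → ℝ) (dk : ℕ → E), (∀ k, 0 < t k) →
    Tendsto t atTop (nhds 0) → Tendsto dk atTop (nhds d) →
    (∀ k, x + t k • dk k ∈ S) →
    ∃ vk : ℕ → E, Tendsto vk atTop (nhds v) ∧
      ∀ k, vk k ∈ tangentConeB S (x + t k • dk k)}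

/-- Directional neighborhood `V_{ρ,δ}(d)`. -/
def dirNbhd (d : E) (ρ δ : ℝ) : Set E :=
  {w | ‖w‖ ≤ δ ∧ ‖‖d‖ • w - ‖w‖ • d‖ ≤ ρ * ‖w‖ * ‖d‖}

/-- Support function, with values in `EReal` (so that `σ_∅ = -∞`). -/
def suppFn (A : Set E) (l : E) : EReal :=
  ⨆ u ∈ A, ((⟪l, u⟫ : ℝ) : EReal)

/-! With `w k = (2 / t k) • (dk k - d)` the points `x + t k • d + ½ t k² • w k = x + t k • dk k`
lie in `S`. If `‖w k‖` does not tend to infinity, a bounded subsequence has a limit, which lies in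
the outer second-order tangent set. Otherwise `r k = t k * ‖w k‖ = 2 ‖dk k - d‖ → 0` while
`t k / r k = ‖w k‖⁻¹ → 0`, and a cluster point of `w k / ‖w k‖` on the unit sphere is a nonzero
element of the asymptotic second-order tangent cone. -/

section SecondOrderTangents

variable {S : Set E} {x d : E} {t : ℕ → ℝ} {w : ℕ → E}

theorem half_mul_sq_smul_two_div_smul {τ : ℝ} (hτ : τ ≠ 0) (v : E) :
    ((1/2 : ℝ) * τ ^ 2) • ((2 / τ) • v) = τ • v := by
  rw [smul_smul]
  congr 1
  field_simp

theorem mul_norm_two_div_smul {τ : ℝ} (hτ : 0 < τ) (v : E) :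
    τ * ‖(2 / τ) • v‖ = 2 * ‖v‖ := by
  rw [norm_smul, Real.norm_of_nonneg (by positivity)]
  field_simp

theorem mem_asympTangent_of_tendsto_inv_norm_smul {a : E} (ht : ∀ k, 0 < t k)
    (ht0 : Tendsto t atTop (𝓝 0))
    (hS : ∀ k, x + t k • d + ((1/2 : ℝ) * t k ^ 2) • w k ∈ S)
    (hr : Tendsto (fun k => t k * ‖w k‖) atTop (𝓝 0))
    (hw : Tendsto (fun k => ‖w k‖) atTop atTop) (hw0 : ∀ k, w k ≠ 0)
    (ha : Tendsto (fun k => ‖w k‖⁻¹ • w k) atTop (𝓝 a)) :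
    a ∈ asympTangent S x d := by
  refine ⟨t, fun k => t k * ‖w k‖, fun k => ‖w k‖⁻¹ • w k, ht,
    fun k => mul_pos (ht k) (norm_pos_iff.mpr (hw0 k)), ht0, hr, ?_, ha, fun k => ?_⟩
  · have hquot : (fun k => t k / (t k * ‖w k‖)) = fun k => ‖w k‖⁻¹ := by
      funext k
      field_simp [(ht k).ne']
    rw [hquot]
    exact tendsto_inv_atTop_zero.comp hw
  · convert hS k using 2
    rw [smul_smul]
    congr 1
    field_simp [norm_ne_zero_iff.mpr (hw0 k)]

theorem exists_ne_zero_mem_asympTangent [ProperSpace E] (ht : ∀ k, 0 < t k)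
    (ht0 : Tendsto t atTop (𝓝 0))
    (hS : ∀ k, x + t k • d + ((1/2 : ℝ) * t k ^ 2) • w k ∈ S)
    (hr : Tendsto (fun k => t k * ‖w k‖) atTop (𝓝 0))
    (hw : Tendsto (fun k => ‖w k‖) atTop atTop) :
    ∃ a ∈ asympTangent S x d, a ≠ 0 := by
  obtain ⟨φ, hφ, hφw⟩ := extraction_of_eventually_atTop (hw.eventually_gt_atTop 0)
  have hφw0 (j : ℕ) : w (φ j) ≠ 0 := norm_pos_iff.mp (hφw j)
  obtain ⟨a, ha, ψ, hψ, hlim⟩ := (isCompact_sphere (0 : E) 1).tendsto_subseq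
    (x := fun j => ‖w (φ j)‖⁻¹ • w (φ j))
    fun j => mem_sphere_zero_iff_norm.mpr (norm_smul_inv_norm (hφw0 j))
  have hχ : Tendsto (φ ∘ ψ) atTop atTop := hφ.tendsto_atTop.comp hψ.tendsto_atTop
  exact ⟨a, mem_asympTangent_of_tendsto_inv_norm_smul (fun j => ht _) (ht0.comp hχ)
    (fun j => hS _) (hr.comp hχ) (hw.comp hχ) (fun j => hφw0 _) hlim,
    ne_zero_of_mem_sphere one_ne_zero ⟨a, ha⟩⟩

theorem secondTangent_nonempty [ProperSpace E] (ht : ∀ k, 0 < t k)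
    (ht0 : Tendsto t atTop (𝓝 0))
    (hS : ∀ k, x + t k • d + ((1/2 : ℝ) * t k ^ 2) • w k ∈ S)
    (hw : ¬Tendsto (fun k => ‖w k‖) atTop atTop) :
    (secondTangent S x d).Nonempty := by
  simp only [tendsto_atTop, not_forall, not_eventually, not_le] at hw
  obtain ⟨M, hM⟩ := hw
  obtain ⟨a, -, φ, hφ, hlim⟩ := tendsto_subseq_of_frequently_bounded
    (Metric.isBounded_ball (x := (0 : E)) (r := M)) (by simpa using hM)
  exact ⟨a, t ∘ φ, w ∘ φ, fun j => ht _, ht0.comp hφ.tendsto_atTop, hlim, fun j => hS _⟩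

theorem secondTangent_union_asympTangent_diff_nonempty [ProperSpace E]
    (hd : d ∈ tangentConeB S x) :
    (secondTangent S x d ∪ (asympTangent S x d \ {0})).Nonempty := by
  obtain ⟨t, dk, ht, ht0, hdk, hS⟩ := hd
  set w : ℕ → E := fun k => (2 / t k) • (dk k - d)
  have hSw (k : ℕ) : x + t k • d + ((1/2 : ℝ) * t k ^ 2) • w k ∈ S := by
    rw [half_mul_sq_smul_two_div_smul (ht k).ne', add_assoc, ← smul_add,
      add_sub_cancel]
    exact hS k
  by_cases hw : Tendsto (fun k => ‖w k‖) atTop atTop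
  · have hr : Tendsto (fun k => t k * ‖w k‖) atTop (𝓝 0) := by
      simp_rw [w, mul_norm_two_div_smul (ht _)]
      simpa using ((hdk.sub_const d).norm.const_mul 2)
    obtain ⟨a, ha, ha0⟩ := exists_ne_zero_mem_asympTangent ht ht0 hSw hr hw
    exact ⟨a, Or.inr ⟨ha, ha0⟩⟩
  · obtain ⟨a, ha⟩ := secondTangent_nonempty ht ht0 hSw hw
    exact ⟨a, Or.inl ha⟩

end SecondOrderTangents

theorem stmt0_general {n : ℕ} (S : Set (EuclideanSpace ℝ (Fin n)))
    (x : EuclideanSpace ℝ (Fin n)) (d : EuclideanSpace ℝ (Fin n))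
    (hd : d ∈ tangentConeB S x) :
    (secondTangent S x d ∪ (asympTangent S x d \ {0})).Nonempty :=
  secondTangent_union_asympTangent_diff_nonempty hd

theorem stmt0 {n : ℕ} (S : Set (EuclideanSpace ℝ (Fin n))) (hS : IsClosed S)
    (x : EuclideanSpace ℝ (Fin n)) (hx : x ∈ S) (d : EuclideanSpace ℝ (Fin n))
    (hd : d ∈ tangentConeB S x) :
    (secondTangent S x d ∪ (asympTangent S x d \ {0})).Nonempty :=
  stmt0_general S x d hd
end
end

section
/- Let S ⊆ ℝⁿ be a closed set, x̄ ∈ S, and d ∈ T_S(x̄). Then T''_S(x̄; d) + T̂_S(x̄; d) = T''_S(x̄; d), where T̂_S(x̄; d) is the directional regular (Clarke) tangent cone. -/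
open Filter Topology Set
open scoped RealInnerProductSpace Pointwise

noncomputable section

variable {E : Type*} [NormedAddCommGroup E] [InnerProductSpace ℝ E]

/-! If `w ∈ T''_S(x; d)` is realised by `y_k = x + t_k d + σ_k w_k ∈ S` with
`σ_k = t_k r_k / 2 = o(t_k)`, then every point of `S` near the segment `y_k + [0, σ_k] v` is of
the form `x + t_k d'` with `d'` close to `d`, so `T̂_S(x; d)` provides tangent directions there
close to `v`. A Nagumo-type argument along the segment gives `dist (y_k + σ_k v, S) = o(σ_k)`,
and projecting onto `S` yields `w + v ∈ T''_S(x; d)`. The reverse inclusion is `0 ∈ T̂_S(x; d)`. -/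

open Metric

theorem zero_mem_tangentConeB {S : Set E} {y : E} (hy : y ∈ S) : (0 : E) ∈ tangentConeB S y :=
  ⟨fun k => 1 / (k + 1), fun _ => 0, fun _ => by positivity,
    tendsto_one_div_add_atTop_nhds_zero_nat, tendsto_const_nhds, fun _ => by simpa using hy⟩

theorem zero_mem_dirClarkeTangent {S : Set E} {x d : E} : (0 : E) ∈ dirClarkeTangent S x d :=
  fun _ _ _ _ _ hmem => ⟨fun _ => 0, tendsto_const_nhds, fun k => zero_mem_tangentConeB (hmem k)⟩

theorem exists_forall_exists_tangent_of_mem_dirClarkeTangent {S : Set E} {x d v : E}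
    (hv : v ∈ dirClarkeTangent S x d) {ε : ℝ} (hε : 0 < ε) :
    ∃ δ > 0, ∀ t ∈ Ioo 0 δ, ∀ d', ‖d' - d‖ < δ → x + t • d' ∈ S →
      ∃ u ∈ tangentConeB S (x + t • d'), ‖u - v‖ < ε := by
  by_contra! h
  choose t ht d' hd' hmem hfar using fun k : ℕ => h (1 / (k + 1)) (by positivity)
  have ht0 : Tendsto t atTop (𝓝 0) :=
    squeeze_zero (fun k => (ht k).1.le) (fun k => (ht k).2.le)
      tendsto_one_div_add_atTop_nhds_zero_nat
  have hd'd : Tendsto d' atTop (𝓝 d) :=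
    tendsto_iff_norm_sub_tendsto_zero.2 <| squeeze_zero (fun _ => norm_nonneg _)
      (fun k => (hd' k).le) tendsto_one_div_add_atTop_nhds_zero_nat
  obtain ⟨u, hu, hutan⟩ := hv t d' (fun k => (ht k).1) ht0 hd'd hmem
  obtain ⟨k, hk⟩ := (hu.eventually (ball_mem_nhds v hε)).exists
  exact (hfar k (u k) (hutan k)).not_gt (by simpa [dist_eq_norm] using hk)

section Proper

variable [ProperSpace E]

theorem exists_pos_infDist_add_smul_le {S : Set E} (hS : IsClosed S) (hne : S.Nonempty)
    {p v : E} {ε ρ η : ℝ} (hp : infDist p S ≤ ρ)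
    (htan : ∀ z ∈ S, ‖p - z‖ ≤ ρ → ∃ u ∈ tangentConeB S z, ‖u - v‖ < ε) (hη : 0 < η) :
    ∃ s ∈ Ioo 0 η, infDist (p + s • v) S ≤ ρ + ε * s := by
  obtain ⟨z, hzS, hz⟩ := hS.exists_infDist_eq_dist hne p
  obtain ⟨u, ⟨s, a, hs, hs0, ha, hmem⟩, huv⟩ :=
    htan z hzS (by rw [← dist_eq_norm, ← hz]; exact hp)
  have hs_small : ∀ᶠ m in atTop, s m < η := hs0.eventually (gt_mem_nhds hη)
  have ha_close : ∀ᶠ m in atTop, ‖a m - v‖ < ε :=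
    (ha.sub_const v).norm.eventually (gt_mem_nhds huv)
  obtain ⟨m, hsm, ham⟩ := (hs_small.and ha_close).exists
  refine ⟨s m, ⟨hs m, hsm⟩, ?_⟩
  calc infDist (p + s m • v) S ≤ dist (p + s m • v) (z + s m • a m) :=
        infDist_le_dist_of_mem (hmem m)
    _ = ‖(p - z) + s m • (v - a m)‖ := by rw [dist_eq_norm]; congr 1; module
    _ ≤ ‖p - z‖ + s m * ‖v - a m‖ := by
        grw [norm_add_le, norm_smul, Real.norm_of_nonneg (hs m).le]
    _ ≤ ρ + ε * s m := by
        rw [← dist_eq_norm, ← hz, norm_sub_rev, mul_comm]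
        gcongr
        exact (hs m).le

/-- A Nagumo-type estimate: the largest `τ ≤ σ` with `dist (y + τ v) S ≤ ε τ` cannot stop short
of `σ`, since a tangent direction `ε`-close to `v` at a nearest point pushes it further. -/
theorem infDist_add_smul_le_of_forall_exists_tangent {S : Set E} (hS : IsClosed S) {y v : E}
    (hy : y ∈ S) {σ ε : ℝ} (hσ : 0 ≤ σ)
    (htan : ∀ τ ∈ Ico 0 σ, ∀ z ∈ S, ‖y + τ • v - z‖ ≤ ε * τ →
      ∃ u ∈ tangentConeB S z, ‖u - v‖ < ε) :
    infDist (y + σ • v) S ≤ ε * σ := by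
  set A : Set ℝ := Icc 0 σ ∩ {τ | infDist (y + τ • v) S ≤ ε * τ}
  have hA0 : (0 : ℝ) ∈ A := ⟨⟨le_rfl, hσ⟩, by simp [infDist_zero_of_mem hy]⟩
  have hAbdd : BddAbove A := ⟨σ, fun τ hτ => hτ.1.2⟩
  have hAclosed : IsClosed A := isClosed_Icc.inter <| isClosed_le (by fun_prop) (by fun_prop)
  obtain ⟨⟨hτ0, hτσ⟩, hτA⟩ := hAclosed.csSup_mem ⟨0, hA0⟩ hAbdd
  obtain hτσ | hτσ := hτσ.lt_or_eq
  · obtain ⟨s, ⟨hs, hsσ⟩, hsA⟩ := exists_pos_infDist_add_smul_le hS ⟨y, hy⟩ hτA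
      (htan _ ⟨hτ0, hτσ⟩) (sub_pos.2 hτσ)
    have : sSup A + s ∈ A := ⟨⟨by positivity, by linarith⟩, by
      rw [mem_ofPred_eq, add_smul, ← add_assoc, mul_add]; exact hsA⟩
    linarith [le_csSup hAbdd this]
  · rwa [← hτσ]

theorem mem_asympTangent_of_isLittleO {S : Set E} (hS : IsClosed S) (hne : S.Nonempty)
    {x d w : E} {t r : ℕ → ℝ} {wk : ℕ → E} (ht : ∀ k, 0 < t k) (hr : ∀ k, 0 < r k)
    (ht0 : Tendsto t atTop (𝓝 0)) (hr0 : Tendsto r atTop (𝓝 0))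
    (htr : Tendsto (fun k => t k / r k) atTop (𝓝 0)) (hwk : Tendsto wk atTop (𝓝 w))
    (hdist : (fun k => infDist (x + t k • d + ((1 / 2 : ℝ) * t k * r k) • wk k) S) =o[atTop]
      fun k => (1 / 2 : ℝ) * t k * r k) :
    w ∈ asympTangent S x d := by
  set σ : ℕ → ℝ := fun k => (1 / 2 : ℝ) * t k * r k
  have hσ : ∀ k, σ k ≠ 0 := fun k => (by have := ht k; have := hr k; positivity : 0 < σ k).ne'
  set p : ℕ → E := fun k => x + t k • d + σ k • wk k
  choose q hqS hq using fun k => hS.exists_infDist_eq_dist hne (p k)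
  have hcorr : Tendsto (fun k => (σ k)⁻¹ • (q k - p k)) atTop (𝓝 0) := by
    refine tendsto_zero_iff_norm_tendsto_zero.2 ((hdist.tendsto_div_nhds_zero).congr fun k => ?_)
    rw [norm_smul, norm_inv, hq, dist_eq_norm, norm_sub_rev, Real.norm_eq_abs,
      abs_of_pos (by have := ht k; have := hr k; positivity : 0 < σ k), inv_mul_eq_div]
  refine ⟨t, r, fun k => wk k + (σ k)⁻¹ • (q k - p k), ht, hr, ht0, hr0, htr,
    by simpa using hwk.add hcorr, fun k => ?_⟩
  have hqk : x + t k • d + σ k • (wk k + (σ k)⁻¹ • (q k - p k)) = q k := by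
    rw [smul_add, smul_inv_smul₀ (hσ k)]
    simp only [p]
    abel
  exact hqk ▸ hqS k

theorem add_mem_asympTangent {S : Set E} (hS : IsClosed S) {x d w v : E}
    (hw : w ∈ asympTangent S x d) (hv : v ∈ dirClarkeTangent S x d) :
    w + v ∈ asympTangent S x d := by
  obtain ⟨t, r, wk, ht, hr, ht0, hr0, htr, hwk, hmem⟩ := hw
  refine mem_asympTangent_of_isLittleO hS ⟨_, hmem 0⟩ ht hr ht0 hr0 htr (hwk.add_const v) <|
    Asymptotics.IsLittleO.of_bound fun ε hε => ?_
  obtain ⟨δ, hδ, hδv⟩ := exists_forall_exists_tangent_of_mem_dirClarkeTangent hv hε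
  have hbound : Tendsto (fun k => r k / 2 * (‖wk k‖ + ‖v‖ + ε)) atTop (𝓝 0) := by
    simpa using (hr0.div_const 2).mul ((hwk.norm.add_const ‖v‖).add_const ε)
  filter_upwards [ht0.eventually (gt_mem_nhds hδ), hbound.eventually (gt_mem_nhds hδ)]
    with k htk hrk
  set σ := (1 / 2 : ℝ) * t k * r k
  have hσ : 0 < σ := by have := ht k; have := hr k; positivity
  rw [Real.norm_of_nonneg infDist_nonneg, Real.norm_of_nonneg hσ.le, smul_add, ← add_assoc]
  refine infDist_add_smul_le_of_forall_exists_tangent hS (hmem k) hσ.le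
    fun τ ⟨hτ0, hτσ⟩ z hzS hz => ?_
  -- write `z = x + t k • d'`; the step from `x + t k • d` to `z` is `O(σ)`, i.e. `o(t k)`
  set d' := (t k)⁻¹ • (z - x)
  have hz' : x + t k • d' = z := by simp [d', smul_smul, mul_inv_cancel₀ (ht k).ne']
  have hd' : ‖d' - d‖ < δ := calc
    ‖d' - d‖ = (t k)⁻¹ * ‖σ • wk k + τ • v - (x + t k • d + σ • wk k + τ • v - z)‖ := by
        rw [← Real.norm_of_nonneg (inv_nonneg.2 (ht k).le), ← norm_smul]
        congr 1
        simp only [d', smul_sub, smul_add, smul_smul, inv_mul_cancel₀ (ht k).ne', one_smul]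
        abel
    _ ≤ (t k)⁻¹ * (σ * ‖wk k‖ + σ * ‖v‖ + ε * σ) := by
        refine mul_le_mul_of_nonneg_left ?_ (inv_nonneg.2 (ht k).le)
        grw [norm_sub_le, norm_add_le, norm_smul, norm_smul, hz,
          Real.norm_of_nonneg hσ.le, Real.norm_of_nonneg hτ0, hτσ.le]
    _ = r k / 2 * (‖wk k‖ + ‖v‖ + ε) := by field_simp [(ht k).ne']; ring
    _ < δ := hrk
  simpa [hz'] using hδv (t k) ⟨ht k, htk⟩ d' hd' (hz' ▸ hzS)

end Proper

theorem stmt3_general {n : ℕ} (S : Set (EuclideanSpace ℝ (Fin n))) (hS : IsClosed S)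
    (x : EuclideanSpace ℝ (Fin n)) (d : EuclideanSpace ℝ (Fin n)) :
    asympTangent S x d + dirClarkeTangent S x d = asympTangent S x d :=
  (add_subset_iff.2 fun _ hw _ hv => add_mem_asympTangent hS hw hv).antisymm
    (subset_add_left _ zero_mem_dirClarkeTangent)

theorem stmt3 {n : ℕ} (S : Set (EuclideanSpace ℝ (Fin n))) (hS : IsClosed S)
    (x : EuclideanSpace ℝ (Fin n)) (hx : x ∈ S) (d : EuclideanSpace ℝ (Fin n))
    (hd : d ∈ tangentConeB S x) :
    asympTangent S x d + dirClarkeTangent S x d = asympTangent S x d :=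
  stmt3_general S hS x d
end
end

section
/- Let S ⊆ ℝⁿ be a closed set, x̄ ∈ S, and d ∈ T_S(x̄). Then for every w ∈ T''_S(x̄; d), the limiting (Mordukhovich) normal cone to T''_S(x̄; d) at w is contained in the directional limiting normal cone N_S(x̄; d); that is, N_{T''_S(x̄;d)}(w) ⊆ N_S(x̄; d). -/
open Filter Topology Set
open scoped RealInnerProductSpace

noncomputable section

variable {E : Type*} [NormedAddCommGroup E] [InnerProductSpace ℝ E]

/-!
Let `v` be a Fréchet normal to `T''_S(x̄; d)` at `w`, witnessed by points
`s_k = x̄ + t_k d + ½ t_k r_k w_k ∈ S`. Push `s_k` by `½ t_k r_k ρ v` and project back onto `S`: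
the rescaled residual `u_k` is a proximal, hence Fréchet, normal to `S` at
`x̄ + t_k (d + ½ r_k q_k)` with `q_k = w_k + ρ (v - u_k)`, and `‖u_k‖ ≤ ‖v‖`. For a cluster point
`u` of `(u_k)`, `w + ρ (v - u)` lies in `T''_S(x̄; d)`, so the Fréchet inequality at `w` together
with `‖u‖ ≤ ‖v‖` forces `u` to be close to `v`. This puts every Fréchet normal of `T''_S(x̄; d)`
into the closed cone `N_S(x̄; d)`, which therefore also contains its limiting normals.
-/

lemma smul_sub_mem_frechetNormal {S : Set E} {p y : E} (hp : p ∈ S)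
    (hmin : ∀ z ∈ S, ‖y - p‖ ≤ ‖y - z‖) {c : ℝ} (hc : 0 ≤ c) :
    c • (y - p) ∈ frechetNormal S p := by
  refine ⟨hp, fun ε hε => ⟨2 * ε / (c + 1), by positivity, fun z hz hzp => ?_⟩⟩
  have hinner : 2 * ⟪y - p, z - p⟫ ≤ ‖z - p‖ ^ 2 := by
    have hsq := pow_le_pow_left₀ (norm_nonneg _) (hmin z hz) 2
    rw [← sub_sub_sub_cancel_right y z p, norm_sub_sq_real (y - p) (z - p)] at hsq
    linarith
  have hcz : c * ‖z - p‖ ≤ 2 * ε := by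
    rw [lt_div_iff₀ (by positivity)] at hzp
    nlinarith [norm_nonneg (z - p)]
  rw [real_inner_smul_left]
  nlinarith [norm_nonneg (z - p)]

/-- Moving `s ∈ S` by `c • v` and projecting back onto `S` produces a Fréchet normal `u`. -/
lemma exists_mem_frechetNormal_add_smul_sub [ProperSpace E] {S : Set E} (hS : IsClosed S)
    {s : E} (hs : s ∈ S) (v : E) {c : ℝ} (hc : 0 < c) :
    ∃ u, ‖u‖ ≤ ‖v‖ ∧ u ∈ frechetNormal S (s + c • (v - u)) := by
  obtain ⟨p, hp, hdist⟩ := hS.exists_infDist_eq_dist ⟨s, hs⟩ (s + c • v)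
  have hmin : ∀ z ∈ S, ‖s + c • v - p‖ ≤ ‖s + c • v - z‖ := fun z hz => by
    simpa only [← dist_eq_norm, ← hdist] using Metric.infDist_le_dist_of_mem hz
  refine ⟨c⁻¹ • (s + c • v - p), ?_, ?_⟩
  · rw [norm_smul, Real.norm_of_nonneg (inv_nonneg.2 hc.le), inv_mul_le_iff₀ hc]
    simpa [norm_smul, Real.norm_of_nonneg hc.le] using hmin s hs
  · have hproj : s + c • (v - c⁻¹ • (s + c • v - p)) = p := by
      rw [smul_sub, smul_inv_smul₀ hc.ne']
      abel
    rw [hproj]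
    exact smul_sub_mem_frechetNormal hp hmin (inv_nonneg.2 hc.le)

lemma norm_sub_le_of_norm_le_of_inner_le {u v : E} {ε : ℝ} (hε : 0 ≤ ε) (huv : ‖u‖ ≤ ‖v‖)
    (hinner : ⟪v, v - u⟫ ≤ ε * ‖v - u‖) : ‖v - u‖ ≤ 2 * ε := by
  have hsq : ‖v - u‖ ^ 2 ≤ 2 * ⟪v, v - u⟫ := by
    rw [norm_sub_sq_real, inner_sub_right, real_inner_self_eq_norm_sq]
    nlinarith [norm_nonneg u]
  nlinarith [norm_nonneg (v - u)]

lemma mem_dirLimitingNormal_iff {S : Set E} {x d v : E} :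
    v ∈ dirLimitingNormal S x d ↔ ∀ ε > (0 : ℝ), ∃ (t : ℝ) (d' v' : E), 0 < t ∧ t < ε ∧
      ‖d' - d‖ < ε ∧ ‖v' - v‖ < ε ∧ v' ∈ frechetNormal S (x + t • d') := by
  constructor
  · rintro ⟨t, dk, vk, ht, ht0, hdk, hvk, hmem⟩ ε hε
    have hd := (tendsto_iff_norm_sub_tendsto_zero.1 hdk).eventually_lt_const hε
    have hv := (tendsto_iff_norm_sub_tendsto_zero.1 hvk).eventually_lt_const hε
    obtain ⟨k, htk, hdk, hvk⟩ := ((ht0.eventually_lt_const hε).and (hd.and hv)).exists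
    exact ⟨t k, dk k, vk k, ht k, htk, hdk, hvk, hmem k⟩
  · intro h
    choose t dk vk ht htε hdk hvk hmem using fun k : ℕ => h (1 / (k + 1)) (by positivity)
    have hlim : Tendsto (fun k : ℕ => 1 / ((k : ℝ) + 1)) atTop (𝓝 0) :=
      tendsto_one_div_add_atTop_nhds_zero_nat
    refine ⟨t, dk, vk, ht, squeeze_zero (fun k => (ht k).le) (fun k => (htε k).le) hlim,
      ?_, ?_, hmem⟩
    · exact tendsto_iff_norm_sub_tendsto_zero.2 <|
        squeeze_zero (fun _ => norm_nonneg _) (fun k => (hdk k).le) hlim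
    · exact tendsto_iff_norm_sub_tendsto_zero.2 <|
        squeeze_zero (fun _ => norm_nonneg _) (fun k => (hvk k).le) hlim

lemma isClosed_dirLimitingNormal {S : Set E} {x d : E} :
    IsClosed (dirLimitingNormal S x d) := by
  refine isClosed_of_closure_subset fun v hv => mem_dirLimitingNormal_iff.2 fun ε hε => ?_
  obtain ⟨v₀, hv₀, hvv₀⟩ := Metric.mem_closure_iff.1 hv (ε / 2) (half_pos hε)
  obtain ⟨t, d', v', ht, htε, hd', hv', hmem⟩ :=
    mem_dirLimitingNormal_iff.1 hv₀ (ε / 2) (half_pos hε)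
  refine ⟨t, d', v', ht, by linarith, by linarith, ?_, hmem⟩
  calc ‖v' - v‖ ≤ ‖v' - v₀‖ + ‖v₀ - v‖ := norm_sub_le_norm_sub_add_norm_sub _ _ _
    _ < ε := by rw [← dist_eq_norm v₀, dist_comm]; linarith

lemma limitingNormal_subset_of_frechetNormal_subset {A C : Set E} {x : E} (hC : IsClosed C)
    (h : ∀ y, frechetNormal A y ⊆ C) : limitingNormal A x ⊆ C := by
  rintro v ⟨xk, vk, -, hvk, hmem⟩
  exact hC.mem_of_tendsto hvk (Eventually.of_forall fun k => h (xk k) (hmem k))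

lemma exists_pos_norm_sub_lt_of_mem_frechetNormal {A : Set E} {w v : E}
    (hv : v ∈ frechetNormal A w) {ε : ℝ} (hε : 0 < ε) :
    ∃ ρ > (0 : ℝ), ∀ u, ‖u‖ ≤ ‖v‖ → w + ρ • (v - u) ∈ A → ‖v - u‖ < ε := by
  obtain ⟨δ, hδ, hvδ⟩ := hv.2 (ε / 3) (by positivity)
  set ρ := δ / (2 * ‖v‖ + 1) with hρ_def
  have hρ : 0 < ρ := by positivity
  refine ⟨ρ, hρ, fun u hu hmem => ?_⟩
  have hnear : ‖ρ • (v - u)‖ < δ := by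
    have hρv : ρ * (2 * ‖v‖) < δ := by
      rw [hρ_def, div_mul_eq_mul_div, div_lt_iff₀ (by positivity)]
      nlinarith [norm_nonneg v]
    rw [norm_smul, Real.norm_of_nonneg hρ.le]
    nlinarith [norm_sub_le v u]
  have hineq := hvδ _ hmem (by rwa [add_sub_cancel_left])
  rw [add_sub_cancel_left, real_inner_smul_right, norm_smul, Real.norm_of_nonneg hρ.le,
    mul_left_comm] at hineq
  have := norm_sub_le_of_norm_le_of_inner_le (by positivity) hu (le_of_mul_le_mul_left hineq hρ)
  linarith

lemma frechetNormal_asympTangent_subset_dirLimitingNormal [ProperSpace E] {S : Set E}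
    (hS : IsClosed S) {x d w : E} :
    frechetNormal (asympTangent S x d) w ⊆ dirLimitingNormal S x d := by
  intro v hv
  obtain ⟨t, r, wk, ht, hr, ht0, hr0, htr, hwk, hmemS⟩ := hv.1
  refine mem_dirLimitingNormal_iff.2 fun ε hε => ?_
  obtain ⟨ρ, hρ, hρv⟩ := exists_pos_norm_sub_lt_of_mem_frechetNormal hv hε
  choose u hu hmem using fun k => exists_mem_frechetNormal_add_smul_sub hS (hmemS k) v
    (c := 1 / 2 * t k * r k * ρ) (by have := ht k; have := hr k; positivity)
  set q : ℕ → E := fun k => wk k + ρ • (v - u k)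
  have hq : ∀ k, x + t k • d + (1 / 2 * t k * r k) • wk k + (1 / 2 * t k * r k * ρ) • (v - u k)
      = x + t k • d + (1 / 2 * t k * r k) • q k := fun k => by module
  have hq' : ∀ k, x + t k • d + (1 / 2 * t k * r k) • q k = x + t k • (d + (r k / 2) • q k) :=
    fun k => by module
  obtain ⟨u₀, hu₀, φ, hφ, hu₀_lim⟩ := (isCompact_closedBall (0 : E) ‖v‖).tendsto_subseq
    fun k => mem_closedBall_zero_iff.2 (hu k)
  have hq_lim : Tendsto (q ∘ φ) atTop (𝓝 (w + ρ • (v - u₀))) :=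
    (hwk.comp hφ.tendsto_atTop).add ((tendsto_const_nhds.sub hu₀_lim).const_smul ρ)
  have hq_mem : w + ρ • (v - u₀) ∈ asympTangent S x d :=
    ⟨t ∘ φ, r ∘ φ, q ∘ φ, fun _ => ht _, fun _ => hr _, ht0.comp hφ.tendsto_atTop,
      hr0.comp hφ.tendsto_atTop, htr.comp hφ.tendsto_atTop, hq_lim,
      fun k => hq (φ k) ▸ (hmem (φ k)).1⟩
  have hu₀v : ‖u₀ - v‖ < ε := norm_sub_rev v u₀ ▸ hρv u₀ (mem_closedBall_zero_iff.1 hu₀) hq_mem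
  have hdir : Tendsto (fun k => ‖(r (φ k) / 2) • q (φ k)‖) atTop (𝓝 0) := by
    simpa using (((hr0.comp hφ.tendsto_atTop).div_const 2).smul hq_lim).norm
  have hnormal : Tendsto (fun k => ‖u (φ k) - v‖) atTop (𝓝 ‖u₀ - v‖) :=
    (hu₀_lim.sub_const v).norm
  obtain ⟨k, htk, hdk, hvk⟩ := (((ht0.comp hφ.tendsto_atTop).eventually_lt_const hε).and
    ((hdir.eventually_lt_const hε).and (hnormal.eventually_lt_const hu₀v))).exists
  exact ⟨t (φ k), d + (r (φ k) / 2) • q (φ k), u (φ k), ht _, htk,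
    by rwa [add_sub_cancel_left], hvk, hq' (φ k) ▸ hq (φ k) ▸ hmem (φ k)⟩

theorem stmt5_general {n : ℕ} (S : Set (EuclideanSpace ℝ (Fin n))) (hS : IsClosed S)
    (x : EuclideanSpace ℝ (Fin n)) (d : EuclideanSpace ℝ (Fin n)) :
    ∀ w ∈ asympTangent S x d,
      limitingNormal (asympTangent S x d) w ⊆ dirLimitingNormal S x d := fun _ _ =>
  limitingNormal_subset_of_frechetNormal_subset isClosed_dirLimitingNormal
    fun _ => frechetNormal_asympTangent_subset_dirLimitingNormal hS

theorem stmt5 {n : ℕ} (S : Set (EuclideanSpace ℝ (Fin n))) (hS : IsClosed S)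
    (x : EuclideanSpace ℝ (Fin n)) (hx : x ∈ S) (d : EuclideanSpace ℝ (Fin n))
    (hd : d ∈ tangentConeB S x) :
    ∀ w ∈ asympTangent S x d,
      limitingNormal (asympTangent S x d) w ⊆ dirLimitingNormal S x d :=
  stmt5_general S hS x d
end
end

section
/- Let S = {(x₁, x₂) ∈ ℝ² : x₁² − x₂³ = 0}, x̄ = (0,0), and d = (0,1). Then T_S(x̄) = ℝ₊·(0,1), T''_S(x̄; d) = ℝ², T²_S(x̄; d) = ∅, and consequently N_{T''_S(x̄;d)}(w) = {(0,0)} for all w ∈ ℝ², while the directional limiting normal cone N_S(x̄; d) = ℝ × {0}, showing that the inclusion N_{T''_S(x̄;d)}(w) ⊆ N_S(x̄; d) can be strict. -/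
/-! The cusp is the image of `τ ↦ (τ³, τ²)`. Dividing the cusp equation for `t • d` by `t²` gives
`d₀² = t d₁³`, which forces `d₀ = 0 ≤ d₁` in the limit. For second-order directions, dividing by
`t³` gives `t w₀² / 4 = (1 + t w₁ / 2)³`, impossible as `t → 0`; with the slower scale `t ≈ r²`
every `w` becomes reachable, so `T'' = ℝ²` and its normal cones are trivial.
Regular normals at `γ(u) = (u³, u²)`, `u ≠ 0`, are orthogonal to both tangent directions `±γ'(u)`,
so their second coordinate is `-(3/2) u` times the first and vanishes in the limit `u → 0`.
Conversely `(a, -(3/2) s a)` is a multiple of the gradient of `x₀² - x₁³` at `γ(s)`, hence a regular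
normal, and it tends to `(a, 0)`. -/

open Filter Topology Set
open scoped RealInnerProductSpace

noncomputable section

variable {E : Type*} [NormedAddCommGroup E] [InnerProductSpace ℝ E]

theorem zero_mem_frechetNormal {S : Set E} {x : E} (hx : x ∈ S) : 0 ∈ frechetNormal S x :=
  ⟨hx, fun ε hε => ⟨1, one_pos, fun y _ _ => by rw [inner_zero_left]; positivity⟩⟩

theorem inner_nonpos_of_mem_frechetNormal {S : Set E} {x v w : E}
    (hv : v ∈ frechetNormal S x) (hw : w ∈ tangentConeB S x) : ⟪v, w⟫ ≤ 0 := by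
  obtain ⟨t, dk, ht, ht0, hdk, hmem⟩ := hw
  have hle : ∀ ε > (0 : ℝ), ⟪v, w⟫ ≤ ε * ‖w‖ := by
    intro ε hε
    obtain ⟨δ, hδ, hδv⟩ := hv.2 ε hε
    have hsmall : Tendsto (fun k => t k • dk k) atTop (𝓝 0) := by
      simpa using ht0.smul hdk
    have hev : ∀ᶠ k in atTop, ⟪v, dk k⟫ ≤ ε * ‖dk k‖ := by
      filter_upwards [hsmall.eventually (Metric.ball_mem_nhds 0 hδ)] with k hk
      have h := hδv _ (hmem k) (by simpa using hk)
      rw [add_sub_cancel_left, inner_smul_right, norm_smul, Real.norm_of_nonneg (ht k).le,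
        mul_left_comm] at h
      exact le_of_mul_le_mul_left h (ht k)
    exact le_of_tendsto_of_tendsto (tendsto_const_nhds.inner hdk)
      (tendsto_const_nhds.mul hdk.norm) hev
  have hlim : Tendsto (fun ε : ℝ => ε * ‖w‖) (𝓝[>] 0) (𝓝 0) := by
    simpa using (tendsto_nhdsWithin_of_tendsto_nhds (a := (0 : ℝ)) (s := Ioi 0)
      tendsto_id).mul_const ‖w‖
  exact ge_of_tendsto hlim (eventually_nhdsWithin_of_forall hle)

theorem tangentConeB_univ (x : E) : tangentConeB univ x = univ :=
  eq_univ_of_forall fun w => ⟨fun k => 1 / ((k : ℝ) + 1), fun _ => w, fun k => by positivity,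
    tendsto_one_div_add_atTop_nhds_zero_nat, tendsto_const_nhds, fun _ => mem_univ _⟩

theorem frechetNormal_univ (x : E) : frechetNormal univ x = {0} := by
  refine Subset.antisymm (fun v hv => ?_)
    (singleton_subset_iff.2 (zero_mem_frechetNormal (mem_univ x)))
  have hv_tangent : v ∈ tangentConeB univ x := by rw [tangentConeB_univ]; exact mem_univ v
  exact real_inner_self_nonpos.1 (inner_nonpos_of_mem_frechetNormal hv hv_tangent)

theorem limitingNormal_univ (x : E) : limitingNormal univ x = {0} := by
  refine Subset.antisymm (fun v ⟨xk, vk, _, hvk, hmem⟩ => ?_) (singleton_subset_iff.2 ?_)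
  · have hvk0 : vk = fun _ => 0 := funext fun k => by simpa [frechetNormal_univ] using hmem k
    exact tendsto_nhds_unique hvk (hvk0 ▸ tendsto_const_nhds)
  · exact ⟨fun _ => x, fun _ => 0, tendsto_const_nhds, tendsto_const_nhds,
      fun _ => zero_mem_frechetNormal (mem_univ x)⟩

theorem mem_frechetNormal_of_hasFDerivAt {S : Set E} {g : E → ℝ} {v p : E}
    (hg : HasFDerivAt g (innerSL ℝ v) p) (hp : p ∈ S) (hS : ∀ y ∈ S, g y = g p) :
    v ∈ frechetNormal S p := by
  refine ⟨hp, fun ε hε => ?_⟩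
  obtain ⟨δ, hδ, hball⟩ := Metric.eventually_nhds_iff.1 (hg.isLittleO.def hε)
  refine ⟨δ, hδ, fun y hy hyδ => ?_⟩
  have h := hball (show dist y p < δ by rwa [dist_eq_norm])
  rw [hS y hy, sub_self, zero_sub, norm_neg, innerSL_apply_apply, Real.norm_eq_abs] at h
  exact (le_abs_self _).trans h

theorem mem_tangentConeB_of_hasDerivAt {S : Set E} {γ : ℝ → E} {γ' : E} {u : ℝ}
    (hγ : HasDerivAt γ γ' u) (hS : ∀ τ, γ τ ∈ S) : γ' ∈ tangentConeB S (γ u) := by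
  set s : ℕ → ℝ := fun k => 1 / ((k : ℝ) + 1)
  have hs : ∀ k, 0 < s k := fun k => by positivity
  have hs0 : Tendsto s atTop (𝓝 0) := tendsto_one_div_add_atTop_nhds_zero_nat
  have hus : Tendsto (fun k => u + s k) atTop (𝓝[≠] u) :=
    tendsto_nhdsWithin_of_tendsto_nhds_of_eventually_within _
      (by simpa using tendsto_const_nhds.add hs0)
      (Eventually.of_forall fun k => by simpa using (hs k).ne')
  refine ⟨s, fun k => slope γ u (u + s k), hs, hs0,
    (hasDerivAt_iff_tendsto_slope.1 hγ).comp hus, fun k => ?_⟩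
  have h := sub_smul_slope_vadd γ u (u + s k)
  rw [add_sub_cancel_left, vadd_eq_add] at h
  rw [add_comm, h]
  exact hS _

theorem inner_eq_zero_of_hasDerivAt_of_mem_frechetNormal {S : Set E} {γ : ℝ → E} {γ' v : E}
    {u : ℝ} (hγ : HasDerivAt γ γ' u) (hS : ∀ τ, γ τ ∈ S) (hv : v ∈ frechetNormal S (γ u)) :
    ⟪v, γ'⟫ = 0 := by
  have hγ_neg : HasDerivAt (fun τ => γ (-τ)) (-γ') (-u) := by
    simpa [Function.comp_def] using
      HasDerivAt.scomp (-u) (by rwa [neg_neg]) (hasDerivAt_neg (-u))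
  have h₁ := inner_nonpos_of_mem_frechetNormal hv (mem_tangentConeB_of_hasDerivAt hγ hS)
  have h₂ := inner_nonpos_of_mem_frechetNormal (by rwa [neg_neg])
    (mem_tangentConeB_of_hasDerivAt hγ_neg fun τ => hS (-τ))
  rw [inner_neg_right] at h₂
  linarith

local notation "ℝ²" => EuclideanSpace ℝ (Fin 2)

theorem Filter.Tendsto.piLp_apply {ι n : Type*} {l : Filter ι} {f : ι → EuclideanSpace ℝ n}
    {x : EuclideanSpace ℝ n} (h : Tendsto f l (𝓝 x)) (i : n) :
    Tendsto (fun k => f k i) l (𝓝 (x i)) :=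
  ((PiLp.continuous_apply 2 _ i).tendsto x).comp h

theorem tendsto_vec₂ {ι : Type*} {l : Filter ι} {f g : ι → ℝ} {a b : ℝ}
    (hf : Tendsto f l (𝓝 a)) (hg : Tendsto g l (𝓝 b)) :
    Tendsto (fun k => !₂[f k, g k]) l (𝓝 !₂[a, b]) := by
  refine (PiLp.continuous_toLp 2 _).continuousAt.tendsto.comp (tendsto_pi_nhds.2 fun i => ?_)
  fin_cases i <;> simpa

theorem EuclideanSpace.ext_fin_two {x y : ℝ²} (h0 : x 0 = y 0) (h1 : x 1 = y 1) : x = y := by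
  ext i; fin_cases i; exacts [h0, h1]

theorem EuclideanSpace.eq_vec₂ (x : ℝ²) : x = !₂[x 0, x 1] :=
  EuclideanSpace.ext_fin_two rfl rfl

theorem EuclideanSpace.vec₂_apply_zero (a b : ℝ) : (!₂[a, b] : ℝ²) 0 = a := rfl

theorem EuclideanSpace.vec₂_apply_one (a b : ℝ) : (!₂[a, b] : ℝ²) 1 = b := rfl

theorem EuclideanSpace.inner_fin_two (x y : ℝ²) : ⟪x, y⟫ = x 0 * y 0 + x 1 * y 1 := by
  simp [PiLp.inner_apply, Fin.sum_univ_two, mul_comm]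

def cusp : Set ℝ² := {x | x 0 ^ 2 - x 1 ^ 3 = 0}

def cuspCurve (τ : ℝ) : ℝ² := !₂[τ ^ 3, τ ^ 2]

theorem mem_cusp {x : ℝ²} : x ∈ cusp ↔ x 0 ^ 2 = x 1 ^ 3 := sub_eq_zero

theorem cuspCurve_apply_zero (τ : ℝ) : cuspCurve τ 0 = τ ^ 3 := rfl

theorem cuspCurve_apply_one (τ : ℝ) : cuspCurve τ 1 = τ ^ 2 := rfl

theorem cuspCurve_mem_cusp (τ : ℝ) : cuspCurve τ ∈ cusp := by
  rw [mem_cusp, cuspCurve_apply_zero, cuspCurve_apply_one]; ring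

-- When `x 1 = 0` the parameter is `0 / 0 = 0`, which is still right since then `x = 0`.
theorem eq_cuspCurve_of_mem_cusp {x : ℝ²} (hx : x ∈ cusp) : x = cuspCurve (x 0 / x 1) := by
  rw [mem_cusp] at hx
  rcases eq_or_ne (x 1) 0 with h1 | h1
  · have h0 : x 0 = 0 := by simpa [h1] using hx
    refine EuclideanSpace.ext_fin_two ?_ ?_ <;>
      simp [cuspCurve_apply_zero, cuspCurve_apply_one, h0, h1]
  · refine EuclideanSpace.ext_fin_two ?_ ?_
    · rw [cuspCurve_apply_zero, div_pow, eq_div_iff (pow_ne_zero 3 h1)]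
      linear_combination -x 0 * hx
    · rw [cuspCurve_apply_one, div_pow, eq_div_iff (pow_ne_zero 2 h1)]
      linear_combination -hx

theorem hasDerivAt_cuspCurve (τ : ℝ) : HasDerivAt cuspCurve !₂[3 * τ ^ 2, 2 * τ] τ := by
  have h : HasDerivAt (fun τ : ℝ => ![τ ^ 3, τ ^ 2]) ![3 * τ ^ 2, 2 * τ] τ := by
    refine hasDerivAt_pi.2 fun i => ?_
    fin_cases i
    · simpa using hasDerivAt_pow 3 τ
    · simpa using hasDerivAt_pow 2 τ
  exact (PiLp.continuousLinearEquiv 2 ℝ _).symm.hasFDerivAt.comp_hasDerivAt τ h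

theorem hasFDerivAt_mul_cuspEquation (c : ℝ) (p : ℝ²) :
    HasFDerivAt (fun x : ℝ² => c * (x 0 ^ 2 - x 1 ^ 3))
      (innerSL ℝ !₂[2 * c * p 0, -(3 * c * p 1 ^ 2)]) p := by
  have h0 := (EuclideanSpace.proj (0 : Fin 2) : ℝ² →L[ℝ] ℝ).hasFDerivAt (x := p)
  have h1 := (EuclideanSpace.proj (1 : Fin 2) : ℝ² →L[ℝ] ℝ).hasFDerivAt (x := p)
  refine (((h0.pow 2).sub (h1.pow 3)).const_mul c).congr_fderiv
    (ContinuousLinearMap.ext fun h => ?_)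
  simp only [PiLp.proj_apply, Nat.add_one_sub_one, pow_one, nsmul_eq_mul, Nat.cast_ofNat,
    smul_apply, sub_apply, smul_eq_mul, coe_innerSL_apply, EuclideanSpace.inner_fin_two,
    Matrix.cons_val_zero, Matrix.cons_val_one, Matrix.cons_val_fin_one]
  ring

theorem frechetNormal_cusp_apply_one {u : ℝ} {v : ℝ²} (hu : u ≠ 0)
    (hv : v ∈ frechetNormal cusp (cuspCurve u)) : v 1 = -(3 / 2) * u * v 0 := by
  have h := inner_eq_zero_of_hasDerivAt_of_mem_frechetNormal (hasDerivAt_cuspCurve u)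
    cuspCurve_mem_cusp hv
  rw [EuclideanSpace.inner_fin_two, EuclideanSpace.vec₂_apply_zero,
    EuclideanSpace.vec₂_apply_one] at h
  apply mul_left_cancel₀ (mul_ne_zero two_ne_zero hu)
  linear_combination h

-- `!₂[a, -(3 / 2) * s * a]` is the gradient at `cuspCurve s` of `a / (2 s³) * (x₀² - x₁³)`.
theorem mem_frechetNormal_cusp {s : ℝ} (hs : s ≠ 0) (a : ℝ) :
    !₂[a, -(3 / 2) * s * a] ∈ frechetNormal cusp (cuspCurve s) := by
  convert mem_frechetNormal_of_hasFDerivAt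
    (hasFDerivAt_mul_cuspEquation (a / (2 * s ^ 3)) (cuspCurve s)) (cuspCurve_mem_cusp s)
    fun y hy => ?_ using 1
  · refine EuclideanSpace.ext_fin_two ?_ ?_
    · rw [EuclideanSpace.vec₂_apply_zero, EuclideanSpace.vec₂_apply_zero, cuspCurve_apply_zero]
      field_simp
    · rw [EuclideanSpace.vec₂_apply_one, EuclideanSpace.vec₂_apply_one, cuspCurve_apply_one]
      field_simp
  · simp only [mem_cusp.1 hy, mem_cusp.1 (cuspCurve_mem_cusp s), sub_self]

theorem tangentConeB_cusp : tangentConeB cusp 0 = {w : ℝ² | w 0 = 0 ∧ 0 ≤ w 1} := by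
  ext w
  constructor
  · rintro ⟨t, dk, ht, ht0, hdk, hmem⟩
    have hk : ∀ k, dk k 0 ^ 2 = t k * dk k 1 ^ 3 := fun k => by
      have h := mem_cusp.1 (hmem k)
      simp only [zero_add, PiLp.smul_apply, smul_eq_mul] at h
      exact mul_left_cancel₀ (pow_ne_zero 2 (ht k).ne') (by linear_combination h)
    have hd1 := hdk.piLp_apply 1
    refine ⟨?_, ge_of_tendsto' hd1 fun k => ?_⟩
    · have h := tendsto_nhds_unique ((hdk.piLp_apply 0).pow 2)
        ((ht0.mul (hd1.pow 3)).congr fun k => (hk k).symm)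
      simpa using h
    · have h : 0 ≤ t k * dk k 1 ^ 3 := hk k ▸ sq_nonneg _
      exact (Odd.pow_nonneg_iff ⟨1, rfl⟩).1 (nonneg_of_mul_nonneg_right h (ht k))
  · rintro ⟨hw0, hw1⟩
    set s : ℕ → ℝ := fun k => 1 / ((k : ℝ) + 1)
    have hs0 : Tendsto s atTop (𝓝 0) := tendsto_one_div_add_atTop_nhds_zero_nat
    -- `s² • (s b √b, b) = (s³ b √b, s² b)` lies on the cusp
    refine ⟨fun k => s k ^ 2, fun k => !₂[s k * (w 1 * √(w 1)), w 1], fun k => by positivity,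
      by simpa using hs0.pow 2, ?_, fun k => ?_⟩
    · have hw : !₂[0 * (w 1 * √(w 1)), w 1] = w := EuclideanSpace.ext_fin_two (by simp [hw0]) rfl
      exact hw ▸ tendsto_vec₂ (hs0.mul_const _) tendsto_const_nhds
    · simp only [zero_add, mem_cusp, PiLp.smul_apply, smul_eq_mul, Matrix.cons_val_zero,
        Matrix.cons_val_one, Matrix.cons_val_fin_one, mul_pow, Real.sq_sqrt hw1]
      ring

theorem secondTangent_cusp : secondTangent cusp 0 !₂[0, 1] = ∅ := by
  refine eq_empty_iff_forall_notMem.2 fun w ⟨t, wk, ht, ht0, hwk, hmem⟩ => ?_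
  have hk : ∀ k, t k * wk k 0 ^ 2 / 4 = (1 + t k * wk k 1 / 2) ^ 3 := fun k => by
    have h := mem_cusp.1 (hmem k)
    simp only [zero_add, one_div, PiLp.add_apply, PiLp.smul_apply, smul_eq_mul,
      Matrix.cons_val_zero, Matrix.cons_val_one, Matrix.cons_val_fin_one, mul_zero, mul_one] at h
    exact mul_left_cancel₀ (pow_ne_zero 3 (ht k).ne') (by linear_combination h)
  have h := tendsto_nhds_unique ((ht0.mul ((hwk.piLp_apply 0).pow 2)).div_const 4)
    (((tendsto_const_nhds.add ((ht0.mul (hwk.piLp_apply 1)).div_const 2)).pow 3).congr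
      fun k => (hk k).symm)
  norm_num at h

theorem asympTangent_cusp : asympTangent cusp 0 !₂[0, 1] = univ := by
  refine eq_univ_of_forall fun w => ?_
  obtain ⟨a, ha, ha_lim⟩ : ∃ a : ℕ → ℝ, (∀ k, a k ≠ 0) ∧ Tendsto a atTop (𝓝 (w 0)) :=
    mem_closure_iff_seq_limit.1
      ((dense_compl_singleton (0 : ℝ)).closure_eq.symm ▸ mem_univ (w 0))
  set b := w 1
  set r : ℕ → ℝ := fun k => 1 / ((k : ℝ) + 1) / (1 + |b|)
  set D : ℕ → ℝ := fun k => 1 + r k * b / 2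
  set q : ℕ → ℝ := fun k => a k ^ 2 / (4 * D k ^ 3)
  have hr : ∀ k, 0 < r k := fun k => by positivity
  have hr0 : Tendsto r atTop (𝓝 0) := by
    simpa [r] using tendsto_one_div_add_atTop_nhds_zero_nat.div_const (1 + |b|)
  have hD : ∀ k, 0 < D k := fun k => by
    have h : r k * (1 + |b|) ≤ 1 := by
      rw [div_mul_cancel₀ _ (by positivity)]
      exact div_le_one_of_le₀ (by simp) (by positivity)
    have := neg_abs_le b
    show 0 < 1 + r k * b / 2
    nlinarith [hr k]
  have hD1 : Tendsto D atTop (𝓝 1) := by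
    simpa using tendsto_const_nhds.add ((hr0.mul_const b).div_const 2)
  have hq_lim : Tendsto q atTop (𝓝 (w 0 ^ 2 / (4 * 1 ^ 3))) :=
    (ha_lim.pow 2).div ((hD1.pow 3).const_mul 4) (by norm_num)
  have hqD : ∀ k, a k ^ 2 = 4 * q k * D k ^ 3 := fun k => by
    simp only [q]; field_simp [(hD k).ne']
  have hrq : Tendsto (fun k => r k * q k) atTop (𝓝 0) := by simpa using hr0.mul hq_lim
  -- with `t = r² q`, the point `t (0, 1) + (t r / 2) (a, b) = (t r a / 2, t D)` lies on the cusp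
  refine ⟨fun k => r k ^ 2 * q k, r, fun k => !₂[a k, b], fun k => ?_, hr, ?_, hr0, ?_, ?_,
    fun k => ?_⟩
  · exact mul_pos (pow_pos (hr k) 2)
      (div_pos (pow_two_pos_of_ne_zero (ha k)) (mul_pos four_pos (pow_pos (hD k) 3)))
  · simpa [sq, mul_assoc] using hr0.mul hrq
  · refine hrq.congr fun k => ?_
    field_simp [(hr k).ne']
  · exact w.eq_vec₂ ▸ tendsto_vec₂ ha_lim tendsto_const_nhds
  · simp only [mem_cusp, zero_add, one_div, PiLp.add_apply, PiLp.smul_apply, smul_eq_mul,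
      Matrix.cons_val_zero, Matrix.cons_val_one, Matrix.cons_val_fin_one, mul_zero, mul_one]
    linear_combination (r k ^ 6 * q k ^ 2 / 4) * hqD k

theorem dirLimitingNormal_cusp : dirLimitingNormal cusp 0 !₂[0, 1] = {v : ℝ² | v 1 = 0} := by
  ext v
  constructor
  · rintro ⟨t, dk, vk, ht, ht0, hdk, hvk, hmem⟩
    set u : ℕ → ℝ := fun k => (t k • dk k) 0 / (t k • dk k) 1
    have hp : ∀ k, t k • dk k = cuspCurve (u k) := fun k => by
      have h := eq_cuspCurve_of_mem_cusp (hmem k).1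
      rwa [zero_add] at h
    have hu_sq : ∀ k, u k ^ 2 = t k * dk k 1 := fun k => by
      simpa [cuspCurve] using (congrArg (· 1) (hp k)).symm
    have hu0 : Tendsto u atTop (𝓝 0) := by
      have h : Tendsto (fun k => √(u k ^ 2)) atTop (𝓝 0) := by
        simpa [hu_sq] using (ht0.mul (hdk.piLp_apply 1)).sqrt
      rw [tendsto_zero_iff_abs_tendsto_zero]
      simpa [Real.sqrt_sq_eq_abs, Function.comp_def] using h
    have hvk1 : ∀ᶠ k in atTop, vk k 1 = -(3 / 2) * u k * vk k 0 := by
      have hd1 : Tendsto (fun k => dk k 1) atTop (𝓝 1) := by simpa using hdk.piLp_apply 1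
      filter_upwards [hd1.eventually (eventually_gt_nhds one_pos)] with k hk
      have hu : u k ≠ 0 := by
        rw [← pow_ne_zero_iff two_ne_zero, hu_sq k]
        exact (mul_pos (ht k) hk).ne'
      exact frechetNormal_cusp_apply_one hu (by simpa [hp k] using hmem k)
    refine tendsto_nhds_unique (hvk.piLp_apply 1) ?_
    simpa using ((hu0.const_mul (-(3 / 2))).mul (hvk.piLp_apply 0)).congr'
      (hvk1.mono fun k h => h.symm)
  · rintro (hv : v 1 = 0)
    set s : ℕ → ℝ := fun k => 1 / ((k : ℝ) + 1)
    have hs : ∀ k, 0 < s k := fun k => by positivity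
    have hs0 : Tendsto s atTop (𝓝 0) := tendsto_one_div_add_atTop_nhds_zero_nat
    refine ⟨fun k => s k ^ 2, fun k => !₂[s k, 1], fun k => !₂[v 0, -(3 / 2) * s k * v 0],
      fun k => by positivity, by simpa using hs0.pow 2,
      by simpa using tendsto_vec₂ hs0 tendsto_const_nhds, ?_, fun k => ?_⟩
    · have hv' : !₂[v 0, -(3 / 2) * 0 * v 0] = v := EuclideanSpace.ext_fin_two rfl (by simp [hv])
      exact hv' ▸ tendsto_vec₂ tendsto_const_nhds ((hs0.const_mul _).mul_const _)
    · have hp : 0 + s k ^ 2 • !₂[s k, 1] = cuspCurve (s k) := by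
        refine EuclideanSpace.ext_fin_two ?_ ?_ <;>
          simp only [zero_add, PiLp.smul_apply, smul_eq_mul, Matrix.cons_val_zero,
            Matrix.cons_val_one, Matrix.cons_val_fin_one, mul_one, cuspCurve_apply_zero,
            cuspCurve_apply_one]
        ring
      rw [hp]
      exact mem_frechetNormal_cusp (hs k).ne' _

theorem stmt7 (S : Set (EuclideanSpace ℝ (Fin 2)))
    (hS : S = {x : EuclideanSpace ℝ (Fin 2) | (x 0) ^ 2 - (x 1) ^ 3 = 0})
    (xb d : EuclideanSpace ℝ (Fin 2)) (hxb : xb = 0)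
    (hd0 : d 0 = 0) (hd1 : d 1 = 1) :
    tangentConeB S xb = {w : EuclideanSpace ℝ (Fin 2) | w 0 = 0 ∧ 0 ≤ w 1} ∧
    asympTangent S xb d = Set.univ ∧
    secondTangent S xb d = ∅ ∧
    (∀ w : EuclideanSpace ℝ (Fin 2), limitingNormal (asympTangent S xb d) w = {0}) ∧
    dirLimitingNormal S xb d = {v : EuclideanSpace ℝ (Fin 2) | v 1 = 0} := by
  obtain rfl : S = cusp := hS
  obtain rfl : d = !₂[0, 1] := by rw [d.eq_vec₂, hd0, hd1]
  subst hxb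
  refine ⟨tangentConeB_cusp, asympTangent_cusp, secondTangent_cusp, fun w => ?_,
    dirLimitingNormal_cusp⟩
  rw [asympTangent_cusp]
  exact limitingNormal_univ w
end
end

section
/- Let g : ℝⁿ → ℝᵐ be twice continuously differentiable, K ⊆ ℝᵐ closed, C = g⁻¹(K), x̄ ∈ C, and d ∈ T_C(x̄). Then T''_C(x̄; d) ⊆ {w ∈ ℝⁿ : ∇g(x̄)w ∈ T''_K(g(x̄); ∇g(x̄)d)}. -/
open Filter Topology Set
open scoped RealInnerProductSpace

noncomputable section

variable {E : Type*} [NormedAddCommGroup E] [InnerProductSpace ℝ E]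

/-!
If `x + u k ∈ g ⁻¹' K` with `u k = t k • d + (½ t k r k) • w k`, then
`g (x + u k) = g x + t k • g' d + (½ t k r k) • (g' (w k) + e k)`, where `½ t k r k • e k` is the
second-order Taylor remainder. It is `O(‖u k‖²) = O(t k ²)`, so `e k = O(t k / r k) → 0`:
the scaling `t k / r k → 0` of the asymptotic cone is exactly what absorbs the curvature of `g`.
-/

open Asymptotics Metric

theorem ContDiffAt.isBigO_sub_sub_fderiv {E F : Type*} [NormedAddCommGroup E] [NormedSpace ℝ E]
    [NormedAddCommGroup F] [NormedSpace ℝ F] {f : E → F} {x : E} (hf : ContDiffAt ℝ 2 f x) :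
    (fun h => f (x + h) - f x - fderiv ℝ f x h) =O[𝓝 0] fun h => ‖h‖ ^ 2 := by
  obtain ⟨L, t, ht, hlip⟩ := (hf.fderiv_right (m := 1) (by norm_num)).exists_lipschitzOnWith
  have hdiff : ∀ᶠ y in 𝓝 x, DifferentiableAt ℝ f y :=
    (hf.eventually (by simp)).mono fun y hy => hy.differentiableAt (by norm_num)
  obtain ⟨ε, hε, hball⟩ := nhds_basis_closedBall.mem_iff.mp (inter_mem ht hdiff)
  refine .of_bound L ?_
  filter_upwards [closedBall_mem_nhds 0 hε] with h hh
  rw [mem_closedBall_zero_iff] at hh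
  have hsub : closedBall x ‖h‖ ⊆ t ∩ {y | DifferentiableAt ℝ f y} :=
    (closedBall_subset_closedBall hh).trans hball
  have hx : x ∈ closedBall x ‖h‖ := mem_closedBall_self (norm_nonneg h)
  have hmvt := Convex.norm_image_sub_le_of_norm_fderiv_le' (φ := fderiv ℝ f x) (C := L * ‖h‖)
    (fun y hy => (hsub hy).2) (fun y hy => ?_) (convex_closedBall x ‖h‖) hx
    (y := x + h) (by simp)
  · simpa [sq, mul_assoc] using hmvt
  · calc ‖fderiv ℝ f y - fderiv ℝ f x‖ ≤ L * ‖y - x‖ := hlip.norm_sub_le (hsub hy).1 (hsub hx).1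
      _ ≤ L * ‖h‖ := by gcongr; simpa [dist_eq_norm] using hy

theorem Asymptotics.IsBigO.norm_sq_isLittleO_mul {α E : Type*} [NormedAddCommGroup E]
    {l : Filter α} {u : α → E} {t r : α → ℝ} (hu : u =O[l] t) (htr : t =o[l] r) :
    (fun k => ‖u k‖ ^ 2) =o[l] fun k => t k * r k := by
  have : (fun k => ‖u k‖ ^ 2) =O[l] fun k => t k * t k := by
    simpa [sq] using hu.norm_left.mul hu.norm_left
  exact this.trans_isLittleO ((isBigO_refl t l).mul_isLittleO htr)

theorem ContDiffAt.mapsTo_fderiv_asympTangent_preimage {E F : Type*}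
    [NormedAddCommGroup E] [InnerProductSpace ℝ E] [NormedAddCommGroup F] [InnerProductSpace ℝ F]
    {g : E → F} {x : E} (hg : ContDiffAt ℝ 2 g x) (K : Set F) (d : E) :
    MapsTo (fderiv ℝ g x) (asympTangent (g ⁻¹' K) x d) (asympTangent K (g x) (fderiv ℝ g x d)) := by
  rintro w ⟨t, r, wk, ht, hr, htt, hrt, htr, hwk, hmem⟩
  set A := fderiv ℝ g x
  set s : ℕ → ℝ := fun k => 1 / 2 * t k * r k with hs
  set u : ℕ → E := fun k => t k • d + s k • wk k with hu_def
  set R : E → F := fun h => g (x + h) - g x - A h with hR_def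
  have hu : u =O[atTop] t := by
    have hv : Tendsto (fun k => d + (1 / 2 * r k) • wk k) atTop (𝓝 (d + (1 / 2 * 0 : ℝ) • w)) :=
      tendsto_const_nhds.add ((hrt.const_mul _).smul hwk)
    refine ((isBigO_refl t atTop).smul (hv.isBigO_one ℝ)).congr (fun k => ?_) (fun k => mul_one _)
    simp only [hu_def, hs, smul_add, smul_smul]
    congr 2; ring
  have htr' : t =o[atTop] r := (isLittleO_iff_tendsto fun k hk => absurd hk (hr k).ne').2 htr
  have hR : (fun k => R (u k)) =o[atTop] s := by
    refine (((hg.isBigO_sub_sub_fderiv.comp_tendsto (hu.trans_tendsto htt)).trans_isLittleO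
      (hu.norm_sq_isLittleO_mul htr')).const_mul_right (c := 1 / 2) (by norm_num)).congr_right
      fun k => ?_
    simp only [hs]; ring
  refine ⟨t, r, fun k => A (wk k) + (s k)⁻¹ • R (u k), ht, hr, htt, hrt, htr, ?_, fun k => ?_⟩
  · simpa using ((A.continuous.tendsto w).comp hwk).add hR.tendsto_inv_smul_nhds_zero
  · have hsk : s k ≠ 0 := by positivity [ht k, hr k]
    have hgu : g x + t k • A d + s k • (A (wk k) + (s k)⁻¹ • R (u k)) = g (x + u k) := by
      simp only [smul_add, smul_inv_smul₀ hsk, hR_def, hu_def, map_add, map_smul]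
      abel
    rw [hgu]
    simpa only [mem_preimage, add_assoc] using hmem k

theorem stmt8_general {n m : ℕ} (g : EuclideanSpace ℝ (Fin n) → EuclideanSpace ℝ (Fin m))
    (hg : ContDiff ℝ 2 g) (K : Set (EuclideanSpace ℝ (Fin m)))
    (xb : EuclideanSpace ℝ (Fin n))
    (d : EuclideanSpace ℝ (Fin n)) :
    asympTangent (g ⁻¹' K) xb d ⊆
      {w | fderiv ℝ g xb w ∈ asympTangent K (g xb) (fderiv ℝ g xb d)} :=
  fun _ hw => hg.contDiffAt.mapsTo_fderiv_asympTangent_preimage K d hw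

theorem stmt8 {n m : ℕ} (g : EuclideanSpace ℝ (Fin n) → EuclideanSpace ℝ (Fin m))
    (hg : ContDiff ℝ 2 g) (K : Set (EuclideanSpace ℝ (Fin m))) (hK : IsClosed K)
    (xb : EuclideanSpace ℝ (Fin n)) (hxb : xb ∈ g ⁻¹' K)
    (d : EuclideanSpace ℝ (Fin n)) (hd : d ∈ tangentConeB (g ⁻¹' K) xb) :
    asympTangent (g ⁻¹' K) xb d ⊆
      {w | fderiv ℝ g xb w ∈ asympTangent K (g xb) (fderiv ℝ g xb d)} :=
  stmt8_general g hg K xb d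
end
end

section
/- Let g : ℝⁿ → ℝᵐ be twice continuously differentiable, K ⊆ ℝᵐ closed, C = g⁻¹(K), x̄ ∈ C, and d ∈ T_C(x̄). Then T²_C(x̄; d) ⊆ {w ∈ ℝⁿ : ∇g(x̄)w + ∇²g(x̄)(d,d) ∈ T²_K(g(x̄); ∇g(x̄)d)}. -/
open Filter Topology Set
open scoped RealInnerProductSpace

noncomputable section

variable {E : Type*} [NormedAddCommGroup E] [InnerProductSpace ℝ E]

/-! Writing `h_k = t_k d + ½ t_k² w_k`, the points `g (x̄ + h_k)` lie in `K`, so it suffices to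
show that `z_k = (2 / t_k²) (g (x̄ + h_k) - g x̄ - t_k ∇g(x̄) d)` converges to
`∇g(x̄) w + ∇²g(x̄)(d,d)`: then `g x̄ + t_k ∇g(x̄) d + ½ t_k² z_k = g (x̄ + h_k) ∈ K`. The convergence
is the second-order Taylor expansion of `g` at `x̄`, whose remainder is `o(‖h_k‖²) = o(t_k²)`. -/

section SecondOrderTaylor

open Asymptotics

variable {V W : Type*} [NormedAddCommGroup V] [NormedSpace ℝ V]
  [NormedAddCommGroup W] [NormedSpace ℝ W] {f : V → W} {x : V}

theorem isLittleO_taylor_two (hf : Differentiable ℝ f)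
    (hf' : DifferentiableAt ℝ (fderiv ℝ f) x) :
    (fun h => f (x + h) - f x - fderiv ℝ f x h - (1/2 : ℝ) • fderiv ℝ (fderiv ℝ f) x h h)
      =o[𝓝 0] fun h => ‖h‖ ^ 2 := by
  set A := fderiv ℝ f x
  set B := fderiv ℝ (fderiv ℝ f) x
  have hsymm : ∀ v w, B v w = B w v :=
    second_derivative_symmetric (fun y => (hf y).hasFDerivAt) hf'.hasFDerivAt
  -- By symmetry of `B`, the remainder has derivative `f' (x + y) - f' x - B y = o(‖y‖)`.
  have hquad : ∀ y : V, HasFDerivAt (fun h => (1/2 : ℝ) • B h h) (B y) y := by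
    intro y
    refine ((B.hasFDerivAt.clm_apply (hasFDerivAt_id y)).const_smul (1/2 : ℝ)).congr_fderiv ?_
    ext v
    simp only [ContinuousLinearMap.comp_id, id_eq, add_apply, smul_apply,
      ContinuousLinearMap.flip_apply, hsymm v y]
    module
  have hrem : ∀ y : V, HasFDerivAt (fun h => f (x + h) - f x - A h - (1/2 : ℝ) • B h h)
      (fderiv ℝ f (x + y) - A - B y) y := fun y =>
    ((((hasFDerivAt_comp_add_left x).2 (hf (x + y)).hasFDerivAt).sub_const (f x)).sub
      A.hasFDerivAt).sub (hquad y)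
  have hrem' : (fun y => fderiv ℝ f (x + y) - A - B y) =o[𝓝 0] fun y => ‖y - 0‖ ^ 1 := by
    simpa using (hasFDerivAt_iff_isLittleO_nhds_zero.1 hf'.hasFDerivAt).norm_right
  have := convex_univ.isLittleO_pow_succ (mem_univ 0) (fun y _ => (hrem y).hasFDerivWithinAt)
    (by rwa [nhdsWithin_univ])
  simpa [nhdsWithin_univ] using this

theorem tendsto_inv_sq_smul_comp_smul_of_isLittleO {φ : V → W}
    (hφ : φ =o[𝓝 0] fun h => ‖h‖ ^ 2) {ι : Type*} {l : Filter ι} {t : ι → ℝ} {u : ι → V}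
    {d : V} (ht : Tendsto t l (𝓝 0)) (hu : Tendsto u l (𝓝 d)) :
    Tendsto (fun k => (t k ^ 2)⁻¹ • φ (t k • u k)) l (𝓝 0) := by
  have htu : Tendsto (fun k => t k • u k) l (𝓝 0) := by simpa using ht.smul hu
  have hbound : (fun k => ‖t k • u k‖ ^ 2) =O[l] fun k => t k ^ 2 := by
    have hu2 : (fun k => ‖u k‖ ^ 2) =O[l] fun _ => (1 : ℝ) := (hu.norm.pow 2).isBigO_one ℝ
    simpa [norm_smul, mul_pow] using (isBigO_refl (fun k => t k ^ 2) l).mul hu2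
  exact ((hφ.comp_tendsto htu).trans_isBigO hbound).tendsto_inv_smul_nhds_zero

theorem tendsto_two_div_sq_smul_sub_sub {A : V →L[ℝ] W} {B : V →L[ℝ] V →L[ℝ] W}
    (hf : (fun h => f (x + h) - f x - A h - (1/2 : ℝ) • B h h) =o[𝓝 0] fun h => ‖h‖ ^ 2)
    {ι : Type*} {l : Filter ι} {t : ι → ℝ} {w : ι → V} {d w₀ : V}
    (ht0 : ∀ᶠ k in l, t k ≠ 0) (ht : Tendsto t l (𝓝 0)) (hw : Tendsto w l (𝓝 w₀)) :
    Tendsto (fun k => (2 / t k ^ 2) •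
        (f (x + t k • d + ((1/2 : ℝ) * t k ^ 2) • w k) - f x - t k • A d)) l
      (𝓝 (A w₀ + B d d)) := by
  -- With `u = d + (t / 2) • w` the quotient is `2 t⁻² φ (t • u) + A w + B u u`,
  -- `φ` being the Taylor remainder.
  let u := fun k => d + (t k / 2) • w k
  have hu : Tendsto u l (𝓝 d) := by
    have := tendsto_const_nhds (x := d) |>.add ((ht.div_const 2).smul hw)
    rwa [zero_div, zero_smul, add_zero] at this
  have hrem := tendsto_inv_sq_smul_comp_smul_of_isLittleO hf ht hu
  have hBuu := (B.continuous₂.tendsto (d, d)).comp (hu.prodMk_nhds hu)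
  have hlim := ((hrem.const_smul (2 : ℝ)).add ((A.continuous.tendsto w₀).comp hw)).add hBuu
  rw [smul_zero, zero_add] at hlim
  refine hlim.congr' (ht0.mono fun k hk => ?_)
  have hx : x + t k • u k = x + t k • d + ((1/2 : ℝ) * t k ^ 2) • w k := by
    simp only [u, smul_add, smul_smul, add_assoc]
    congr 3
    ring
  simp only [Function.comp_apply, Function.uncurry_apply_pair, hx]
  simp only [u, map_add, map_smul, add_apply, smul_apply, smul_add, smul_sub, smul_smul]
  match_scalars <;> field_simp <;> ring

end SecondOrderTaylor

theorem stmt9_general {n m : ℕ} (g : EuclideanSpace ℝ (Fin n) → EuclideanSpace ℝ (Fin m))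
    (hg : ContDiff ℝ 2 g) (K : Set (EuclideanSpace ℝ (Fin m)))
    (xb : EuclideanSpace ℝ (Fin n))
    (d : EuclideanSpace ℝ (Fin n)) :
    secondTangent (g ⁻¹' K) xb d ⊆
      {w | fderiv ℝ g xb w + (fderiv ℝ (fderiv ℝ g) xb d) d ∈
        secondTangent K (g xb) (fderiv ℝ g xb d)} := by
  rintro w ⟨t, wk, htpos, ht0, hwk, hmem⟩
  have hdiff : DifferentiableAt ℝ (fderiv ℝ g) xb :=
    (hg.fderiv_right (m := 1) le_rfl).differentiable one_ne_zero xb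
  have htaylor := isLittleO_taylor_two (hg.differentiable two_ne_zero) hdiff
  refine ⟨t, fun k => (2 / t k ^ 2) • (g (xb + t k • d + ((1/2 : ℝ) * t k ^ 2) • wk k) - g xb
      - t k • fderiv ℝ g xb d), htpos, ht0,
    tendsto_two_div_sq_smul_sub_sub htaylor (.of_forall fun k => (htpos k).ne') ht0 hwk,
    fun k => ?_⟩
  have hcoef : (1/2 : ℝ) * t k ^ 2 * (2 / t k ^ 2) = 1 := by field_simp [(htpos k).ne']
  rw [smul_smul, hcoef, one_smul, sub_sub, add_sub_cancel]
  exact hmem k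

theorem stmt9 {n m : ℕ} (g : EuclideanSpace ℝ (Fin n) → EuclideanSpace ℝ (Fin m))
    (hg : ContDiff ℝ 2 g) (K : Set (EuclideanSpace ℝ (Fin m))) (hK : IsClosed K)
    (xb : EuclideanSpace ℝ (Fin n)) (hxb : xb ∈ g ⁻¹' K)
    (d : EuclideanSpace ℝ (Fin n)) (hd : d ∈ tangentConeB (g ⁻¹' K) xb) :
    secondTangent (g ⁻¹' K) xb d ⊆
      {w | fderiv ℝ g xb w + (fderiv ℝ (fderiv ℝ g) xb d) d ∈
        secondTangent K (g xb) (fderiv ℝ g xb d)} :=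
  stmt9_general g hg K xb d
end
end

section
/- Let f : ℝⁿ → ℝ be continuously differentiable, C ⊆ ℝⁿ closed, x̄ ∈ C, and d ∈ T_C(x̄). Suppose x̄ is a local optimal solution of min f over C in direction d, i.e., there exist ρ, δ > 0 with f(x) ≥ f(x̄) for all x ∈ C ∩ (x̄ + V_{ρ,δ}(d)). Then ∇f(x̄)·d ≥ 0. -/
open Filter Topology Set
open scoped RealInnerProductSpace

noncomputable section

variable {E : Type*} [NormedAddCommGroup E] [InnerProductSpace ℝ E]

theorem HasFDerivAt.tendsto_smul_slope_of_tendsto {𝕜 V F : Type*} [NontriviallyNormedField 𝕜]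
    [NormedAddCommGroup V] [NormedSpace 𝕜 V] [NormedAddCommGroup F] [NormedSpace 𝕜 F]
    {f : V → F} {f' : V →L[𝕜] F} {x v : V} (hf : HasFDerivAt f f' x)
    {α : Type*} {l : Filter α} {t : α → 𝕜} {w : α → V}
    (ht_ne : ∀ᶠ k in l, t k ≠ 0) (ht : Tendsto t l (𝓝 0)) (hw : Tendsto w l (𝓝 v)) :
    Tendsto (fun k => (t k)⁻¹ • (f (x + t k • w k) - f x)) l (𝓝 (f' v)) := by
  refine hf.hasFDerivWithinAt.lim (s := univ) ?_ (.of_forall fun _ => mem_univ _) ?_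
  · simpa using ht.smul hw
  · refine hw.congr' ?_
    filter_upwards [ht_ne] with k hk
    rw [inv_smul_smul₀ hk]

theorem smul_mem_dirNbhd {d w : E} {ρ δ t : ℝ} (ht : 0 < t) (htw : ‖t • w‖ ≤ δ)
    (hw : ‖‖d‖ • w - ‖w‖ • d‖ ≤ ρ * ‖w‖ * ‖d‖) : t • w ∈ dirNbhd d ρ δ := by
  refine ⟨htw, ?_⟩
  have hnorm : ‖t • w‖ = t * ‖w‖ := by rw [norm_smul, Real.norm_of_nonneg ht.le]
  have hfactor : ‖d‖ • t • w - (t * ‖w‖) • d = t • (‖d‖ • w - ‖w‖ • d) := by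
    rw [smul_sub, smul_comm ‖d‖ t, mul_smul]
  rw [hnorm, hfactor, norm_smul, Real.norm_of_nonneg ht.le]
  calc t * ‖‖d‖ • w - ‖w‖ • d‖ ≤ t * (ρ * ‖w‖ * ‖d‖) := mul_le_mul_of_nonneg_left hw ht.le
    _ = ρ * (t * ‖w‖) * ‖d‖ := by ring

theorem eventually_norm_smul_sub_smul_le_of_tendsto {α : Type*} {l : Filter α} {d : E}
    {w : α → E} (hd : d ≠ 0) {ρ : ℝ} (hρ : 0 < ρ) (hw : Tendsto w l (𝓝 d)) :
    ∀ᶠ k in l, ‖‖d‖ • w k - ‖w k‖ • d‖ ≤ ρ * ‖w k‖ * ‖d‖ := by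
  have hgap : Tendsto (fun k => ρ * ‖w k‖ * ‖d‖ - ‖‖d‖ • w k - ‖w k‖ • d‖) l
      (𝓝 (ρ * ‖d‖ * ‖d‖ - ‖‖d‖ • d - ‖d‖ • d‖)) :=
    ((tendsto_const_nhds.mul hw.norm).mul tendsto_const_nhds).sub
      ((tendsto_const_nhds.smul hw).sub (hw.norm.smul tendsto_const_nhds)).norm
  have hpos : 0 < ρ * ‖d‖ * ‖d‖ - ‖‖d‖ • d - ‖d‖ • d‖ := by
    have := norm_pos_iff.mpr hd
    rw [sub_self, norm_zero, sub_zero]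
    positivity
  filter_upwards [hgap.eventually (lt_mem_nhds hpos)] with k hk
  linarith

theorem eventually_smul_mem_dirNbhd {α : Type*} {l : Filter α} {d : E} (hd : d ≠ 0)
    {ρ δ : ℝ} (hρ : 0 < ρ) (hδ : 0 < δ) {t : α → ℝ} {w : α → E}
    (ht_pos : ∀ᶠ k in l, 0 < t k) (ht : Tendsto t l (𝓝 0)) (hw : Tendsto w l (𝓝 d)) :
    ∀ᶠ k in l, t k • w k ∈ dirNbhd d ρ δ := by
  have hsmall : Tendsto (fun k => t k • w k) l (𝓝 0) := by simpa using ht.smul hw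
  filter_upwards [ht_pos, hsmall (Metric.closedBall_mem_nhds 0 hδ),
    eventually_norm_smul_sub_smul_le_of_tendsto hd hρ hw] with k hk hball hcone
  exact smul_mem_dirNbhd hk (mem_closedBall_zero_iff.mp hball) hcone

theorem stmt11_general {n : ℕ} (f : EuclideanSpace ℝ (Fin n) → ℝ) (hf : ContDiff ℝ 1 f)
    (C : Set (EuclideanSpace ℝ (Fin n)))
    (xb : EuclideanSpace ℝ (Fin n))
    (d : EuclideanSpace ℝ (Fin n)) (hd : d ∈ tangentConeB C xb)
    (hopt : ∃ ρ > (0:ℝ), ∃ δ > (0:ℝ), ∀ x ∈ C, x - xb ∈ dirNbhd d ρ δ → f xb ≤ f x) :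
    0 ≤ fderiv ℝ f xb d := by
  obtain ⟨ρ, hρ, δ, hδ, hopt⟩ := hopt
  rcases eq_or_ne d 0 with rfl | hd0
  · simp
  obtain ⟨t, w, ht_pos, ht, hw, hmem⟩ := hd
  have hslope := ((hf.differentiable one_ne_zero xb).hasFDerivAt).tendsto_smul_slope_of_tendsto
    (.of_forall fun k => (ht_pos k).ne') ht hw
  refine ge_of_tendsto hslope ?_
  filter_upwards [eventually_smul_mem_dirNbhd hd0 hρ hδ (.of_forall ht_pos) ht hw] with k hk
  have hmin : f xb ≤ f (xb + t k • w k) := hopt _ (hmem k) (by simpa using hk)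
  exact smul_nonneg (inv_nonneg.mpr (ht_pos k).le) (sub_nonneg.mpr hmin)

theorem stmt11 {n : ℕ} (f : EuclideanSpace ℝ (Fin n) → ℝ) (hf : ContDiff ℝ 1 f)
    (C : Set (EuclideanSpace ℝ (Fin n))) (hC : IsClosed C)
    (xb : EuclideanSpace ℝ (Fin n)) (hxb : xb ∈ C)
    (d : EuclideanSpace ℝ (Fin n)) (hd : d ∈ tangentConeB C xb)
    (hopt : ∃ ρ > (0:ℝ), ∃ δ > (0:ℝ), ∀ x ∈ C, x - xb ∈ dirNbhd d ρ δ → f xb ≤ f x) :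
    0 ≤ fderiv ℝ f xb d :=
  stmt11_general f hf C xb d hd hopt
end
end

section
/- Let f : ℝⁿ → ℝ be continuously differentiable, C ⊆ ℝⁿ closed, x̄ ∈ C, and d ∈ T_C(x̄). Suppose x̄ is a local optimal solution of min f over C in direction d (i.e., ∃ ρ, δ > 0 with f(x) ≥ f(x̄) for all x ∈ C ∩ (x̄ + V_{ρ,δ}(d))) and ∇f(x̄)·d = 0. Then −∇f(x̄) ∈ N_C(x̄; d), the directional limiting normal cone to C at x̄ in direction d. -/
open Filter Topology Set
open scoped RealInnerProductSpace

noncomputable section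

variable {E : Type*} [NormedAddCommGroup E] [InnerProductSpace ℝ E]

/-!
Take `t_k ↓ 0`, `d_k → d` with `x_k = x̄ + t_k d_k ∈ C`, and let `y_k` minimize the penalized
function `f + t_k⁻¹ ‖· - x_k‖²` over the compact set `C ∩ (x̄ + V_{ρ,δ}(d)) ∩ B̄(x_k, t_k)`.
Comparing with `x_k` and using `f x̄ ≤ f y_k` gives
`‖(y_k - x_k) / t_k‖² ≤ (f x_k - f x̄) / t_k → ∇f(x̄)·d = 0`. Hence `y_k = x̄ + t_k d'_k` with
`d'_k → d`, so `y_k` lies in the interior of the ball and of the directional neighbourhood and is a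
local minimizer over `C`. Fermat's rule puts `-∇f(y_k) - 2 (y_k - x_k) / t_k` in the Fréchet normal
cone of `C` at `y_k`, and these vectors converge to `-∇f(x̄)`.
-/

lemma tendsto_zero_of_norm_sq_le {α F : Type*} [SeminormedAddGroup F] {l : Filter α}
    {u : α → F} {ε : α → ℝ} (hε : Tendsto ε l (𝓝 0)) (hu : ∀ᶠ k in l, ‖u k‖ ^ 2 ≤ ε k) :
    Tendsto u l (𝓝 0) := by
  refine squeeze_zero_norm' (a := fun k => √(ε k)) ?_ (by simpa using hε.sqrt)
  filter_upwards [hu] with k hk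
  exact Real.le_sqrt_of_sq_le hk

lemma IsMinOn.isLocalMinOn_of_inter_subset {α β : Type*} [TopologicalSpace α] [Preorder β]
    {φ : α → β} {S K A : Set α} {y : α} (hmin : IsMinOn φ K y) (hA : A ∈ 𝓝 y)
    (hsub : S ∩ A ⊆ K) : IsLocalMinOn φ S y := by
  rw [IsLocalMinOn, nhdsWithin_restrict' S hA]
  exact (hmin.on_subset hsub).localize

lemma ContDiff.continuous_gradient [CompleteSpace E] {f : E → ℝ} (hf : ContDiff ℝ 1 f) :
    Continuous (gradient f) :=
  (InnerProductSpace.toDual ℝ E).symm.continuous.comp (hf.continuous_fderiv one_ne_zero)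

lemma HasFDerivAt.tendsto_inv_smul_sub {F : Type*} [NormedAddCommGroup F] [NormedSpace ℝ F]
    {f : E → F} {f' : E →L[ℝ] F} {x d : E} (hf : HasFDerivAt f f' x) {t : ℕ → ℝ} {dk : ℕ → E}
    (ht : ∀ k, t k ≠ 0) (ht0 : Tendsto t atTop (𝓝 0)) (hdk : Tendsto dk atTop (𝓝 d)) :
    Tendsto (fun k => (t k)⁻¹ • (f (x + t k • dk k) - f x)) atTop (𝓝 (f' d)) :=
  hf.hasFDerivWithinAt.lim (s := univ) (by simpa using ht0.smul hdk) (by simp)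
    (by simpa [smul_smul, ht] using hdk)

lemma hasGradientAt_add_mul_norm_sub_sq [CompleteSpace E] {f : E → ℝ} {g y : E}
    (hf : HasGradientAt f g y) (a : ℝ) (x : E) :
    HasGradientAt (fun z => f z + a * ‖z - x‖ ^ 2) (g + (2 * a) • (y - x)) y := by
  rw [hasGradientAt_iff_hasFDerivAt] at hf ⊢
  refine (hf.add (((hasFDerivAt_id y).sub_const x).norm_sq.const_mul a)).congr_fderiv ?_
  ext h
  simp
  ring

lemma mem_frechetNormal_of_eventually {S : Set E} {y v : E} (hy : y ∈ S)
    (h : ∀ ε > (0 : ℝ), ∀ᶠ z in 𝓝[S] y, ⟪v, z - y⟫ ≤ ε * ‖z - y‖) :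
    v ∈ frechetNormal S y := by
  refine ⟨hy, fun ε hε => ?_⟩
  obtain ⟨δ, hδ, hball⟩ := Metric.mem_nhdsWithin_iff.mp (h ε hε)
  exact ⟨δ, hδ, fun z hz hzy => hball ⟨by rwa [Metric.mem_ball, dist_eq_norm], hz⟩⟩

lemma IsLocalMinOn.neg_mem_frechetNormal [CompleteSpace E] {φ : E → ℝ} {S : Set E} {y g : E}
    (hy : y ∈ S) (hmin : IsLocalMinOn φ S y) (hφ : HasGradientAt φ g y) :
    -g ∈ frechetNormal S y := by
  refine mem_frechetNormal_of_eventually hy fun ε hε => ?_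
  have hlin := (hasGradientAt_iff_isLittleO.mp hφ).def hε
  filter_upwards [hmin, nhdsWithin_le_nhds hlin] with z hz hzlin
  rw [inner_neg_left]
  have := (abs_le.mp (Real.norm_eq_abs _ ▸ hzlin)).2
  linarith

lemma mem_dirLimitingNormal_of_eventually {S : Set E} {x d v : E} {t : ℕ → ℝ} {dk vk : ℕ → E}
    (ht : ∀ᶠ k in atTop, 0 < t k) (ht0 : Tendsto t atTop (𝓝 0)) (hdk : Tendsto dk atTop (𝓝 d))
    (hvk : Tendsto vk atTop (𝓝 v))
    (hN : ∀ᶠ k in atTop, vk k ∈ frechetNormal S (x + t k • dk k)) :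
    v ∈ dirLimitingNormal S x d := by
  obtain ⟨N, hN⟩ := eventually_atTop.mp (ht.and hN)
  have hshift := tendsto_add_atTop_nat N
  exact ⟨fun k => t (k + N), fun k => dk (k + N), fun k => vk (k + N),
    fun k => (hN _ (Nat.le_add_left N k)).1, ht0.comp hshift, hdk.comp hshift, hvk.comp hshift,
    fun k => (hN _ (Nat.le_add_left N k)).2⟩

lemma norm_norm_smul_sub_norm_smul_le (d z : E) {t : ℝ} (ht : 0 ≤ t) :
    ‖‖d‖ • z - ‖z‖ • d‖ ≤ 2 * ‖d‖ * ‖z - t • d‖ := by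
  have hsplit : ‖d‖ • z - ‖z‖ • d = ‖d‖ • (z - t • d) + (‖t • d‖ - ‖z‖) • d := by
    rw [norm_smul, Real.norm_eq_abs, abs_of_nonneg ht, smul_sub, sub_smul, mul_smul,
      smul_comm ‖d‖ t d]
    abel
  have hnorm : |‖t • d‖ - ‖z‖| ≤ ‖z - t • d‖ := by
    rw [norm_sub_rev]; exact abs_norm_sub_norm_le _ _
  calc ‖‖d‖ • z - ‖z‖ • d‖
      ≤ ‖d‖ * ‖z - t • d‖ + |‖t • d‖ - ‖z‖| * ‖d‖ := by
        rw [hsplit]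
        refine (norm_add_le _ _).trans_eq ?_
        rw [norm_smul, norm_smul, Real.norm_eq_abs, Real.norm_eq_abs, abs_norm]
    _ ≤ 2 * ‖d‖ * ‖z - t • d‖ := by nlinarith [norm_nonneg d]

lemma isClosed_dirNbhd (d : E) (ρ δ : ℝ) : IsClosed (dirNbhd d ρ δ) :=
  (isClosed_le continuous_norm continuous_const).inter
    (isClosed_le (by fun_prop) (continuous_const.mul continuous_norm |>.mul continuous_const))

lemma exists_closedBall_subset_dirNbhd (d : E) {ρ : ℝ} (hρ : 0 < ρ) :
    ∃ c > (0 : ℝ), ∀ δ t : ℝ, 0 ≤ t → t * (‖d‖ + c) ≤ δ →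
      Metric.closedBall (t • d) (t * c) ⊆ dirNbhd d ρ δ := by
  rcases eq_or_ne d 0 with rfl | hd
  · refine ⟨1, one_pos, fun δ t _ htδ z hz => ⟨?_, by simp⟩⟩
    simpa using (mem_closedBall_zero_iff.mp (by simpa using hz)).trans (by simpa using htδ)
  have hd' : 0 < ‖d‖ := norm_pos_iff.mpr hd
  refine ⟨min ρ 2 * ‖d‖ / 4, by positivity, fun δ t ht htδ z hz => ?_⟩
  have hc2 : min ρ 2 * ‖d‖ / 4 ≤ ‖d‖ / 2 := by nlinarith [min_le_right ρ 2]
  have hcρ : min ρ 2 * ‖d‖ / 4 ≤ ρ * ‖d‖ / 4 := by nlinarith [min_le_left ρ 2]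
  rw [Metric.mem_closedBall, dist_eq_norm] at hz
  have htd : ‖t • d‖ = t * ‖d‖ := by rw [norm_smul, Real.norm_eq_abs, abs_of_nonneg ht]
  have hlow : t * ‖d‖ - t * (min ρ 2 * ‖d‖ / 4) ≤ ‖z‖ := by
    have := norm_sub_norm_le (t • d) z
    rw [htd, norm_sub_rev] at this
    linarith
  refine ⟨?_, ?_⟩
  · have := norm_le_norm_add_norm_sub' z (t • d)
    nlinarith
  · calc ‖‖d‖ • z - ‖z‖ • d‖ ≤ 2 * ‖d‖ * ‖z - t • d‖ := norm_norm_smul_sub_norm_smul_le d z ht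
      _ ≤ 2 * ‖d‖ * (t * (ρ * ‖d‖ / 4)) := by gcongr; nlinarith
      _ = ρ * (t * ‖d‖ / 2) * ‖d‖ := by ring
      _ ≤ ρ * ‖z‖ * ‖d‖ := by gcongr; nlinarith

lemma isLocalMinOn_of_isMinOn_dirNbhd_inter_closedBall {φ : E → ℝ} {C : Set E} {x d x' y : E}
    {ρ δ c t : ℝ} (hcone : Metric.closedBall (t • d) (t * c) ⊆ dirNbhd d ρ δ)
    (hmin : IsMinOn φ ({z ∈ C | z - x ∈ dirNbhd d ρ δ} ∩ Metric.closedBall x' t) y)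
    (hy_cone : dist (y - x) (t • d) < t * c) (hy_ball : dist y x' < t) :
    IsLocalMinOn φ C y := by
  refine hmin.isLocalMinOn_of_inter_subset (A := (· - x) ⁻¹' Metric.ball (t • d) (t * c)
    ∩ Metric.ball x' t) (IsOpen.mem_nhds ?_ ⟨hy_cone, hy_ball⟩) ?_
  · exact (Metric.isOpen_ball.preimage (continuous_sub_right x)).inter Metric.isOpen_ball
  · rintro z ⟨hzC, hzcone, hzball⟩
    exact ⟨⟨hzC, hcone (Metric.ball_subset_closedBall hzcone)⟩,
      Metric.ball_subset_closedBall hzball⟩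

lemma tendsto_inv_smul_sub_of_penalized_le {f : E → ℝ} {f' : E →L[ℝ] ℝ} {x d : E}
    (hf : HasFDerivAt f f' x) (hcrit : f' d = 0) {t : ℕ → ℝ} {dk y : ℕ → E}
    (ht : ∀ k, 0 < t k) (ht0 : Tendsto t atTop (𝓝 0)) (hdk : Tendsto dk atTop (𝓝 d))
    (hlow : ∀ᶠ k in atTop, f x ≤ f (y k))
    (hpen : ∀ᶠ k in atTop,
      f (y k) + (t k)⁻¹ * ‖y k - (x + t k • dk k)‖ ^ 2 ≤ f (x + t k • dk k)) :
    Tendsto (fun k => (t k)⁻¹ • (y k - (x + t k • dk k))) atTop (𝓝 0) := by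
  have hslope := hf.tendsto_inv_smul_sub (fun k => (ht k).ne') ht0 hdk
  rw [hcrit] at hslope
  refine tendsto_zero_of_norm_sq_le hslope ?_
  filter_upwards [hlow, hpen] with k hlow hpen
  have hinv : 0 ≤ (t k)⁻¹ := inv_nonneg.mpr (ht k).le
  rw [norm_smul, Real.norm_eq_abs, abs_of_nonneg hinv, smul_eq_mul, mul_pow, sq, mul_assoc]
  gcongr
  linarith

lemma exists_isMinOn_penalized_inter_closedBall {F : Type*} [NormedAddCommGroup F]
    [ProperSpace F]
    {f : F → ℝ} (hfc : Continuous f) {D : Set F} (hD : IsClosed D) {x : F} (hx : x ∈ D) {t : ℝ}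
    (ht : 0 ≤ t) :
    ∃ y ∈ D ∩ Metric.closedBall x t,
      IsMinOn (fun z => f z + t⁻¹ * ‖z - x‖ ^ 2) (D ∩ Metric.closedBall x t) y :=
  ((isCompact_closedBall _ _).inter_left hD).exists_isMinOn ⟨x, hx, Metric.mem_closedBall_self ht⟩
    (hfc.add (continuous_const.mul ((continuous_sub_right _).norm.pow 2))).continuousOn

theorem exists_isLocalMinOn_penalized [ProperSpace E] {f : E → ℝ} {f' : E →L[ℝ] ℝ}
    (hfc : Continuous f) {C : Set E} (hC : IsClosed C) {x d : E} (hfx : HasFDerivAt f f' x)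
    (hcrit : f' d = 0) {ρ δ : ℝ} (hρ : 0 < ρ) (hδ : 0 < δ)
    (hopt : ∀ y ∈ C, y - x ∈ dirNbhd d ρ δ → f x ≤ f y) {t : ℕ → ℝ} {dk : ℕ → E}
    (ht : ∀ k, 0 < t k) (ht0 : Tendsto t atTop (𝓝 0)) (hdk : Tendsto dk atTop (𝓝 d))
    (hmem : ∀ k, x + t k • dk k ∈ C) :
    ∃ u : ℕ → E, Tendsto u atTop (𝓝 0) ∧ ∀ᶠ k in atTop, x + t k • (dk k + u k) ∈ C ∧
      IsLocalMinOn (fun z => f z + (t k)⁻¹ * ‖z - (x + t k • dk k)‖ ^ 2) C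
        (x + t k • (dk k + u k)) := by
  obtain ⟨c, hc, hcone⟩ := exists_closedBall_subset_dirNbhd d hρ
  set xk := fun k => x + t k • dk k with hxk
  set D := {y ∈ C | y - x ∈ dirNbhd d ρ δ}
  set K := fun k => D ∩ Metric.closedBall (xk k) (t k)
  set g := fun k z => f z + (t k)⁻¹ * ‖z - xk k‖ ^ 2
  have hD : IsClosed D := hC.inter ((isClosed_dirNbhd d ρ δ).preimage (continuous_sub_right x))
  have hminex : ∀ k, ∃ y, xk k ∈ D → y ∈ K k ∧ IsMinOn (g k) (K k) y := fun k => by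
    by_cases hk : xk k ∈ D
    · exact (exists_isMinOn_penalized_inter_closedBall hfc hD hk (ht k).le).imp fun _ h _ => h
    · exact ⟨x, fun h => absurd h hk⟩
  choose y hy using hminex
  set u := fun k => (t k)⁻¹ • (y k - xk k)
  have hty : ∀ᶠ k in atTop, t k * (‖d‖ + c) ≤ δ :=
    (by simpa using ht0.mul_const (‖d‖ + c) : Tendsto _ _ _).eventually_le_const hδ
  have hxkD : ∀ᶠ k in atTop, xk k ∈ D := by
    filter_upwards [hty, hdk (Metric.ball_mem_nhds d hc)] with k hty hdkc
    refine ⟨hmem k, hcone δ (t k) (ht k).le hty ?_⟩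
    rw [Metric.mem_closedBall, hxk, add_sub_cancel_left, dist_smul₀, Real.norm_eq_abs,
      abs_of_pos (ht k)]
    exact mul_le_mul_of_nonneg_left (Metric.mem_ball.mp hdkc).le (ht k).le
  have hu : Tendsto u atTop (𝓝 0) := by
    refine tendsto_inv_smul_sub_of_penalized_le hfx hcrit ht ht0 hdk ?_ ?_
    · filter_upwards [hxkD] with k hk
      exact hopt _ (hy k hk).1.1.1 (hy k hk).1.1.2
    · filter_upwards [hxkD] with k hk
      simpa [g] using (hy k hk).2 ⟨hk, Metric.mem_closedBall_self (ht k).le⟩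
  have hyk : ∀ k, x + t k • (dk k + u k) = y k := fun k => by
    simp only [u, xk, smul_add, smul_inv_smul₀ (ht k).ne']
    abel
  have hd' : Tendsto (fun k => dk k + u k) atTop (𝓝 d) := by simpa using hdk.add hu
  refine ⟨u, hu, ?_⟩
  filter_upwards [hxkD, hty, hd' (Metric.ball_mem_nhds d hc), hu (Metric.ball_mem_nhds 0 one_pos)]
    with k hk hty hdc hu1
  rw [hyk k]
  refine ⟨(hy k hk).1.1.1, isLocalMinOn_of_isMinOn_dirNbhd_inter_closedBall
    (hcone δ (t k) (ht k).le hty) (hy k hk).2 ?_ ?_⟩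
  · rw [← hyk k, add_sub_cancel_left, dist_smul₀, Real.norm_eq_abs, abs_of_pos (ht k)]
    exact mul_lt_mul_of_pos_left hdc (ht k)
  · rw [dist_eq_norm, show y k - xk k = t k • u k from (smul_inv_smul₀ (ht k).ne' _).symm,
      norm_smul, Real.norm_eq_abs, abs_of_pos (ht k)]
    simpa using mul_lt_mul_of_pos_left (mem_ball_zero_iff.mp hu1) (ht k)

theorem neg_gradient_mem_dirLimitingNormal [ProperSpace E] {f : E → ℝ} (hf : ContDiff ℝ 1 f)
    {C : Set E} (hC : IsClosed C) {x d : E} (hd : d ∈ tangentConeB C x) {ρ δ : ℝ} (hρ : 0 < ρ)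
    (hδ : 0 < δ) (hopt : ∀ y ∈ C, y - x ∈ dirNbhd d ρ δ → f x ≤ f y)
    (hcrit : fderiv ℝ f x d = 0) :
    -gradient f x ∈ dirLimitingNormal C x d := by
  obtain ⟨t, dk, ht, ht0, hdk, hmem⟩ := hd
  have hfd : Differentiable ℝ f := hf.differentiable one_ne_zero
  obtain ⟨u, hu, hmin⟩ := exists_isLocalMinOn_penalized hf.continuous hC (hfd x).hasFDerivAt hcrit
    hρ hδ hopt ht ht0 hdk hmem
  have hd' : Tendsto (fun k => dk k + u k) atTop (𝓝 d) := by simpa using hdk.add hu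
  have hy : Tendsto (fun k => x + t k • (dk k + u k)) atTop (𝓝 x) := by
    simpa using (tendsto_const_nhds (x := x)).add (ht0.smul hd')
  have hv : Tendsto (fun k => -(gradient f (x + t k • (dk k + u k)) + (2 : ℝ) • u k)) atTop
      (𝓝 (-gradient f x)) := by
    simpa using (((hf.continuous_gradient.tendsto x).comp hy).add (hu.const_smul (2 : ℝ))).neg
  refine mem_dirLimitingNormal_of_eventually (.of_forall ht) ht0 hd' hv ?_
  filter_upwards [hmin] with k ⟨hyC, hyloc⟩
  refine hyloc.neg_mem_frechetNormal hyC ?_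
  convert hasGradientAt_add_mul_norm_sub_sq (hfd _).hasGradientAt (t k)⁻¹ (x + t k • dk k)
    using 2
  rw [mul_smul, smul_add, add_sub_add_left_eq_sub, add_sub_cancel_left, inv_smul_smul₀ (ht k).ne']

theorem stmt12_general {n : ℕ} (f : EuclideanSpace ℝ (Fin n) → ℝ) (hf : ContDiff ℝ 1 f)
    (C : Set (EuclideanSpace ℝ (Fin n))) (hC : IsClosed C)
    (xb : EuclideanSpace ℝ (Fin n))
    (d : EuclideanSpace ℝ (Fin n)) (hd : d ∈ tangentConeB C xb)
    (hopt : ∃ ρ > (0:ℝ), ∃ δ > (0:ℝ), ∀ x ∈ C, x - xb ∈ dirNbhd d ρ δ → f xb ≤ f x)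
    (hcrit : fderiv ℝ f xb d = 0) :
    -gradient f xb ∈ dirLimitingNormal C xb d := by
  obtain ⟨ρ, hρ, δ, hδ, hopt⟩ := hopt
  exact neg_gradient_mem_dirLimitingNormal hf hC hd hρ hδ hopt hcrit

theorem stmt12 {n : ℕ} (f : EuclideanSpace ℝ (Fin n) → ℝ) (hf : ContDiff ℝ 1 f)
    (C : Set (EuclideanSpace ℝ (Fin n))) (hC : IsClosed C)
    (xb : EuclideanSpace ℝ (Fin n)) (hxb : xb ∈ C)
    (d : EuclideanSpace ℝ (Fin n)) (hd : d ∈ tangentConeB C xb)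
    (hopt : ∃ ρ > (0:ℝ), ∃ δ > (0:ℝ), ∀ x ∈ C, x - xb ∈ dirNbhd d ρ δ → f xb ≤ f x)
    (hcrit : fderiv ℝ f xb d = 0) :
    -gradient f xb ∈ dirLimitingNormal C xb d :=
  stmt12_general f hf C hC xb d hd hopt hcrit
end
end
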